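/- arXiv:2012.13810 — 4 statements merged into one kernel-verified Lean document; each statement's English description precedes it below -/
import Mathlib

section
/- Let Q be a set of finite positive measure and f ∈ L¹(Q, ℂ^d). Suppose g : Q → ℂ^d is measurable and g(x) belongs to the convex body average ⟪f⟫_Q for almost every x ∈ Q. Then there exists a measurable function H : Q × Q → ℂ with ‖H‖_∞ ≤ |Q|^{-1} such that g(z) = ∫_Q H(z,w) f(w) dV(w) for a.e. z ∈ Q. -/
/-!
Every `v ∈ ⟪f⟫_Q` satisfies `‖∑ aⱼ vⱼ‖ ≤ |Q|⁻¹ ∫_Q ‖∑ aⱼ fⱼ‖` for all `a`. Applied to `v = g(z)`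
with `a = u(z)` and integrated in `z`, this bounds `u ↦ ∫ ∑ⱼ uⱼ gⱼ` by `|Q|⁻¹` times the
`L¹(Q × Q)` norm of the kernel `(z, w) ↦ ∑ⱼ uⱼ(z) fⱼ(w)`. By Hahn–Banach the functional extends to
all of `L¹(Q × Q)` with norm at most `|Q|⁻¹`, and by `L¹`–`L^∞` duality (Riesz representation on
`L² ⊆ L¹`, then density) it is integration against some `H` with `‖H‖_∞ ≤ |Q|⁻¹`. Testing with
`uⱼ = 1_s` and Fubini give `∫_s gⱼ = ∫_s ∫_Q H(·, w) fⱼ(w) dw` for every `s`. No measurable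
selection of the functions `φ` representing `g(z)` is needed.
-/

open MeasureTheory

/-- The convex body average `⟪f⟫_Q`: the set of vectors `⟨φ f⟩_Q = (1/|Q|)∫_Q φ f dV` where
`φ` ranges over measurable complex-valued functions with `‖φ‖_∞ ≤ 1`. -/
def convexBodyAvg {d : ℕ} {α : Type*} [MeasurableSpace α] (μ : Measure α) (Q : Set α)
    (f : α → Fin d → ℂ) : Set (Fin d → ℂ) :=
  {v | ∃ φ : α → ℂ, Measurable φ ∧ (∀ x, ‖φ x‖ ≤ 1) ∧
    ∀ j, v j = ((μ Q).toReal⁻¹ : ℂ) * ∫ x in Q, φ x * f x j ∂μ}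

theorem LinearMap.exists_strongDual_comp_eq_of_norm_le {𝕜 E F : Type*} [RCLike 𝕜] [AddCommGroup E]
    [Module 𝕜 E] [NormedAddCommGroup F] [NormedSpace 𝕜 F] (P : E →ₗ[𝕜] F) (L : E →ₗ[𝕜] 𝕜)
    {c : ℝ} (hc : 0 ≤ c) (hL : ∀ u, ‖L u‖ ≤ c * ‖P u‖) :
    ∃ G : StrongDual 𝕜 F, ‖G‖ ≤ c ∧ ∀ u, G (P u) = L u := by
  have hker : LinearMap.ker P ≤ LinearMap.ker L := fun u hu => by
    simpa [LinearMap.mem_ker.1 hu] using hL u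
  let ℓ : LinearMap.range P →ₗ[𝕜] 𝕜 :=
    ((LinearMap.ker P).liftQ L hker).comp P.quotKerEquivRange.symm.toLinearMap
  have hℓ : ∀ u, ℓ ⟨P u, LinearMap.mem_range_self P u⟩ = L u := fun u => by
    simp [ℓ, LinearMap.quotKerEquivRange_symm_apply_image]
  have hℓb : ∀ w, ‖ℓ w‖ ≤ c * ‖w‖ := by
    rintro ⟨_, u, rfl⟩
    exact (hℓ u).symm ▸ hL u
  obtain ⟨G, hGℓ, hGn⟩ := exists_extension_norm_eq _ (ℓ.mkContinuous c hℓb)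
  exact ⟨G, hGn ▸ LinearMap.mkContinuous_norm_le _ hc hℓb, fun u => (hGℓ _).trans (hℓ u)⟩

namespace MeasureTheory

theorem exists_measurable_norm_le_ae_eq {β E : Type*} [MeasurableSpace β] {ρ : Measure β}
    [NormedAddCommGroup E] [MeasurableSpace E] [BorelSpace E] {f : β → E} (hf : AEStronglyMeasurable f ρ) {c : ℝ} (hc : 0 ≤ c)
    (hb : ∀ᵐ p ∂ρ, ‖f p‖ ≤ c) :
    ∃ g : β → E, Measurable g ∧ (∀ p, ‖g p‖ ≤ c) ∧ f =ᵐ[ρ] g := by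
  have hm := hf.stronglyMeasurable_mk.measurable
  refine ⟨fun p => if ‖hf.mk f p‖ ≤ c then hf.mk f p else 0,
    hm.ite (measurableSet_le hm.norm measurable_const) measurable_const, fun p => ?_, ?_⟩
  · dsimp only
    split_ifs with h
    exacts [h, by simpa using hc]
  · filter_upwards [hf.ae_eq_mk, hb] with p hp hpb
    rw [← hp, if_pos (hp ▸ hpb)]

section L1Dual

variable {𝕜 β : Type*} [RCLike 𝕜] [MeasurableSpace β] {ρ : Measure β} [IsFiniteMeasure ρ]

theorem exists_integrable_repr_of_L1_dual (G : StrongDual 𝕜 (β →₁[ρ] 𝕜)) :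
    ∃ H₀ : β → 𝕜, Integrable H₀ ρ ∧
      ∀ φ (hφ : Integrable φ ρ), MemLp φ 2 ρ → G (hφ.toL1 φ) = ∫ p, H₀ p * φ p ∂ρ := by
  -- the inclusion `L² ⊆ L¹`, as Hölder multiplication by `1 ∈ L²`
  let J : (β →₂[ρ] 𝕜) →L[𝕜] (β →₁[ρ] 𝕜) :=
    ContinuousLinearMap.holderL ρ 2 2 1 (ContinuousLinearMap.mul 𝕜 𝕜) (Lp.const 2 ρ 1)
  let v := (InnerProductSpace.toDual 𝕜 (β →₂[ρ] 𝕜)).symm (G.comp J)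
  refine ⟨star v, memLp_one_iff_integrable.mp ((Lp.memLp v).mono_exponent one_le_two).star, ?_⟩
  intro φ hφ hφ2
  have hJ : J (hφ2.toLp φ) = hφ.toL1 φ := by
    refine Lp.ext ?_
    filter_upwards [ContinuousLinearMap.coeFn_holder (r := 1) (ContinuousLinearMap.mul 𝕜 𝕜)
      (Lp.const 2 ρ (1 : 𝕜)) (hφ2.toLp φ), Lp.coeFn_const 2 ρ (1 : 𝕜), hφ2.coeFn_toLp,
      hφ.coeFn_toL1] with p hJp h1 h2 h3
    rw [h3]
    refine (hJp : _).trans ?_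
    rw [ContinuousLinearMap.mul_apply', h1, h2, Function.const_apply, one_mul]
  rw [← hJ, ← ContinuousLinearMap.comp_apply, ← InnerProductSpace.toDual_symm_apply, L2.inner_def]
  refine integral_congr_ae ?_
  filter_upwards [hφ2.coeFn_toLp] with p hp
  simp [RCLike.inner_apply, hp, mul_comm, v]

theorem ae_norm_le_of_L1_dual_repr {G : StrongDual 𝕜 (β →₁[ρ] 𝕜)} {c : ℝ} (hG : ‖G‖ ≤ c)
    {H₀ : β → 𝕜} (hH₀ : Integrable H₀ ρ)
    (hrepr : ∀ φ (hφ : Integrable φ ρ), MemLp φ 2 ρ → G (hφ.toL1 φ) = ∫ p, H₀ p * φ p ∂ρ) :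
    ∀ᵐ p ∂ρ, ‖H₀ p‖ ≤ c := by
  refine ae_le_of_forall_setIntegral_le hH₀.norm (integrable_const c) fun s hs _ => ?_
  -- test `G` against the phase of `H₀` on `s`
  set φ := s.indicator fun p => star (H₀ p) / ‖H₀ p‖
  have hφb : ∀ p, ‖φ p‖ ≤ s.indicator 1 p := by
    intro p
    by_cases hp : p ∈ s
    · by_cases h0 : H₀ p = 0
      · simp [φ, hp, h0]
      · simp [φ, hp, norm_div, h0]
    · simp [φ, hp]
  have hφm : AEStronglyMeasurable φ ρ := by
    have := hH₀.1.aemeasurable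
    exact AEStronglyMeasurable.indicator (by fun_prop : AEMeasurable _ ρ).aestronglyMeasurable hs
  have hφ : Integrable φ ρ :=
    ((integrable_const (1 : ℝ)).indicator hs).mono' hφm (ae_of_all _ hφb)
  have hφ2 : MemLp φ 2 ρ :=
    MemLp.of_bound hφm 1 (ae_of_all _ fun p => (hφb p).trans (s.indicator_le_self' (by simp) p))
  have hHφ : ∀ p, H₀ p * φ p = s.indicator (fun p => (‖H₀ p‖ : 𝕜)) p := by
    intro p
    by_cases hp : p ∈ s
    · by_cases h0 : H₀ p = 0
      · simp [φ, hp, h0]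
      · simp only [φ, Set.indicator_of_mem hp, mul_div_assoc', RCLike.star_def, RCLike.mul_conj]
        field_simp
    · simp [φ, hp]
  have hc : 0 ≤ c := (norm_nonneg G).trans hG
  calc ∫ p in s, ‖H₀ p‖ ∂ρ = ‖G (hφ.toL1 φ)‖ := by
        rw [hrepr φ hφ hφ2, funext hHφ, integral_indicator hs, integral_ofReal,
          RCLike.norm_ofReal, abs_of_nonneg (setIntegral_nonneg hs fun _ _ => norm_nonneg _)]
    _ ≤ c * ‖hφ.toL1 φ‖ := G.le_of_opNorm_le hG _
    _ ≤ c * ρ.real s := by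
        gcongr
        rw [L1.norm_of_fun_eq_integral_norm, ← integral_indicator_one hs]
        exact integral_mono hφ.norm ((integrable_const 1).indicator hs) hφb
    _ = ∫ p in s, c ∂ρ := by rw [setIntegral_const, smul_eq_mul, mul_comm]

theorem exists_bounded_repr_of_L1_dual (G : StrongDual 𝕜 (β →₁[ρ] 𝕜)) {c : ℝ} (hG : ‖G‖ ≤ c) :
    ∃ H : β → 𝕜, Measurable H ∧ (∀ p, ‖H p‖ ≤ c) ∧ ∀ q : β →₁[ρ] 𝕜, G q = ∫ p, H p * q p ∂ρ := by
  obtain ⟨H₀, hH₀, hrepr⟩ := exists_integrable_repr_of_L1_dual G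
  obtain ⟨H, hHm, hHb, hH₀H⟩ := exists_measurable_norm_le_ae_eq hH₀.1
    ((norm_nonneg G).trans hG) (ae_norm_le_of_L1_dual_repr hG hH₀ hrepr)
  suffices ⇑G = fun q : β →₁[ρ] 𝕜 => ∫ p, H p * q p ∂ρ from ⟨H, hHm, hHb, congrFun this⟩
  refine (Lp.simpleFunc.denseRange ENNReal.one_ne_top).equalizer G.continuous ?_ (funext fun q => ?_)
  · have hHinf : MemLp H ⊤ ρ := memLp_top_of_bound hHm.aestronglyMeasurable c (ae_of_all _ hHb)
    let Hinf := hHinf.toLp H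
    refine (continuous_integral.comp
      (ContinuousLinearMap.holderL ρ ⊤ 1 1 (ContinuousLinearMap.mul 𝕜 𝕜) Hinf).continuous).congr
      fun q => integral_congr_ae ?_
    filter_upwards [ContinuousLinearMap.coeFn_holder (r := 1) (ContinuousLinearMap.mul 𝕜 𝕜) Hinf q,
      hHinf.coeFn_toLp]
      with p hp hH
    exact (hp : _).trans (by rw [ContinuousLinearMap.mul_apply', hH])
  · set φ := Lp.simpleFunc.toSimpleFunc q
    obtain ⟨C, hC⟩ := φ.exists_forall_norm_le
    have hφ := φ.integrable_of_isFiniteMeasure (μ := ρ)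
    have hq : (q : β →₁[ρ] 𝕜) = hφ.toL1 φ :=
      Lp.ext ((Lp.simpleFunc.toSimpleFunc_eq_toFun q).symm.trans hφ.coeFn_toL1.symm)
    simp only [Function.comp_apply]
    rw [hq, hrepr φ hφ (MemLp.of_bound φ.aestronglyMeasurable C (ae_of_all _ hC))]
    refine integral_congr_ae ?_
    filter_upwards [hH₀H, hφ.coeFn_toL1] with p h1 h2
    rw [h1, h2]

end L1Dual

section Kernel

variable {α β ι 𝕜 : Type*} [MeasurableSpace α] [MeasurableSpace β] [Fintype ι] [RCLike 𝕜]

theorem integrable_integral_mul_of_norm_le {μ : Measure α} [IsFiniteMeasure μ] {ν : Measure β}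
    [SFinite ν] {H : α × β → 𝕜} (hHm : Measurable H) {c : ℝ} (hHb : ∀ p, ‖H p‖ ≤ c)
    {h : β → 𝕜} (hh : Integrable h ν) :
    Integrable (fun z => ∫ w, H (z, w) * h w ∂ν) μ := by
  refine (integrable_const (c * ∫ w, ‖h w‖ ∂ν)).mono'
    (hHm.aestronglyMeasurable.mul
      (hh.1.comp_quasiMeasurePreserving Measure.quasiMeasurePreserving_snd)).integral_prod_right'
    (ae_of_all _ fun z => ?_)
  rw [← integral_const_mul]
  refine norm_integral_le_of_norm_le (hh.norm.const_mul c) (ae_of_all _ fun w => ?_)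
  rw [norm_mul]
  exact mul_le_mul_of_nonneg_right (hHb _) (norm_nonneg _)

theorem SimpleFunc.integrable_mul {μ : Measure α} (u : SimpleFunc α 𝕜) {h : α → 𝕜}
    (hh : Integrable h μ) : Integrable (fun z => u z * h z) μ := by
  obtain ⟨C, hC⟩ := u.exists_forall_norm_le
  exact hh.bdd_mul u.aestronglyMeasurable (ae_of_all _ hC)

theorem sum_single_apply_mul [DecidableEq ι] (i : ι) (φ : SimpleFunc α 𝕜) (z : α) (F : ι → 𝕜) :
    ∑ k, (Pi.single i φ : ι → SimpleFunc α 𝕜) k z * F k = φ z * F i := by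
  rw [Fintype.sum_eq_single i fun k hk => by simp [Pi.single_eq_of_ne hk]]
  simp

variable {ν : Measure α} [IsFiniteMeasure ν] {f g : α → ι → 𝕜}

-- Test functions are simple functions rather than `L¹` classes, so that the kernel below is an
-- honest function, linear in `u` pointwise.
def tensorSum (f : α → ι → 𝕜) (u : ι → SimpleFunc α 𝕜) : α × α → 𝕜 :=
  fun p => ∑ i, u i p.1 * f p.2 i

theorem integrable_tensorSum (hf : ∀ i, Integrable (f · i) ν) (u : ι → SimpleFunc α 𝕜) :
    Integrable (tensorSum f u) (ν.prod ν) :=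
  integrable_finsetSum _ fun i _ => (u i).integrable_of_isFiniteMeasure.mul_prod (hf i)

noncomputable def tensorSumL1 (hf : ∀ i, Integrable (f · i) ν) :
    (ι → SimpleFunc α 𝕜) →ₗ[𝕜] (α × α →₁[ν.prod ν] 𝕜) where
  toFun u := (integrable_tensorSum hf u).toL1 _
  map_add' u v := by
    rw [← Integrable.toL1_add, Integrable.toL1_eq_toL1_iff]
    refine ae_of_all _ fun p => ?_
    simp [tensorSum, add_mul, Finset.sum_add_distrib]
  map_smul' a u := by
    rw [RingHom.id_apply, ← Integrable.toL1_smul, Integrable.toL1_eq_toL1_iff]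
    refine ae_of_all _ fun p => ?_
    simp [tensorSum, Finset.mul_sum, mul_assoc]

noncomputable def pairing (hg : ∀ i, Integrable (g · i) ν) :
    (ι → SimpleFunc α 𝕜) →ₗ[𝕜] 𝕜 where
  toFun u := ∫ z, ∑ i, u i z * g z i ∂ν
  map_add' u v := by
    rw [← integral_add (integrable_finsetSum _ fun i _ => (u i).integrable_mul (hg i))
      (integrable_finsetSum _ fun i _ => (v i).integrable_mul (hg i))]
    simp [add_mul, Finset.sum_add_distrib]
  map_smul' a u := by
    rw [RingHom.id_apply, smul_eq_mul, ← integral_const_mul]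
    simp [Finset.mul_sum, mul_assoc]

variable {c : ℝ}

theorem integrable_of_ae_norm_sum_le (hg : ∀ i, AEStronglyMeasurable (g · i) ν)
    (hgf : ∀ᵐ z ∂ν, ∀ a : ι → 𝕜, ‖∑ i, a i * g z i‖ ≤ c * ∫ w, ‖∑ i, a i * f w i‖ ∂ν)
    (i : ι) : Integrable (g · i) ν := by
  classical
  refine (integrable_const (c * ∫ w, ‖f w i‖ ∂ν)).mono' (hg i) ?_
  filter_upwards [hgf] with z hz
  simpa [Pi.single_apply] using hz (Pi.single i 1)

theorem norm_pairing_le (hf : ∀ i, Integrable (f · i) ν) (hg : ∀ i, Integrable (g · i) ν)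
    (hgf : ∀ᵐ z ∂ν, ∀ a : ι → 𝕜, ‖∑ i, a i * g z i‖ ≤ c * ∫ w, ‖∑ i, a i * f w i‖ ∂ν)
    (u : ι → SimpleFunc α 𝕜) : ‖pairing hg u‖ ≤ c * ‖tensorSumL1 hf u‖ := by
  have hK := integrable_tensorSum hf u
  calc ‖∫ z, ∑ i, u i z * g z i ∂ν‖
      ≤ ∫ z, c * ∫ w, ‖tensorSum f u (z, w)‖ ∂ν ∂ν :=
        norm_integral_le_of_norm_le (hK.integral_norm_prod_left.const_mul c)
          (by filter_upwards [hgf] with z hz using hz fun i => u i z)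
    _ = c * ∫ p, ‖tensorSum f u p‖ ∂(ν.prod ν) := by
        rw [integral_const_mul, integral_integral hK.norm]
    _ = c * ‖tensorSumL1 hf u‖ := by
        rw [tensorSumL1, LinearMap.coe_mk, AddHom.coe_mk, L1.norm_of_fun_eq_integral_norm]

theorem exists_kernel_of_ae_norm_sum_le (hc : 0 ≤ c) (hf : ∀ i, Integrable (f · i) ν)
    (hg : ∀ i, AEStronglyMeasurable (g · i) ν)
    (hgf : ∀ᵐ z ∂ν, ∀ a : ι → 𝕜, ‖∑ i, a i * g z i‖ ≤ c * ∫ w, ‖∑ i, a i * f w i‖ ∂ν) :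
    ∃ H : α × α → 𝕜, Measurable H ∧ (∀ p, ‖H p‖ ≤ c) ∧
      ∀ᵐ z ∂ν, ∀ i, g z i = ∫ w, H (z, w) * f w i ∂ν := by
  classical
  have hgi := integrable_of_ae_norm_sum_le hg hgf
  obtain ⟨G, hG, hGL⟩ := (tensorSumL1 hf).exists_strongDual_comp_eq_of_norm_le (pairing hgi) hc
    (norm_pairing_le hf hgi hgf)
  obtain ⟨H, hHm, hHb, hHG⟩ := exists_bounded_repr_of_L1_dual G hG
  refine ⟨H, hHm, hHb, ae_all_iff.2 fun i => ?_⟩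
  refine (hgi i).ae_eq_of_forall_setIntegral_eq _ _
    (integrable_integral_mul_of_norm_le hHm hHb (hf i)) fun s hs _ => ?_
  let χ := (SimpleFunc.const α (1 : 𝕜)).restrict s
  let u : ι → SimpleFunc α 𝕜 := Pi.single i χ
  have hK : tensorSum f u = fun p => χ p.1 * f p.2 i := funext fun p => sum_single_apply_mul ..
  calc ∫ z in s, g z i ∂ν = pairing hgi u := by
        rw [← integral_indicator hs]
        refine integral_congr_ae (ae_of_all _ fun z => ?_)
        by_cases hz : z ∈ s <;> simp [u, χ, sum_single_apply_mul, SimpleFunc.coe_restrict _ hs, hz]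
    _ = G (tensorSumL1 hf u) := (hGL u).symm
    _ = ∫ p, H p * (χ p.1 * f p.2 i) ∂(ν.prod ν) := by
        rw [hHG]
        refine integral_congr_ae ?_
        filter_upwards [(integrable_tensorSum hf u).coeFn_toL1] with p hp
        rw [tensorSumL1, LinearMap.coe_mk, AddHom.coe_mk, hp, hK]
    _ = ∫ z in s, ∫ w, H (z, w) * f w i ∂ν ∂ν := by
        rw [integral_prod _ ((χ.integrable_of_isFiniteMeasure.mul_prod (hf i)).bdd_mul
          hHm.aestronglyMeasurable (ae_of_all _ hHb)), ← integral_indicator hs]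
        refine integral_congr_ae (ae_of_all _ fun z => ?_)
        by_cases hz : z ∈ s <;> simp [χ, SimpleFunc.coe_restrict _ hs, hz]

end Kernel

end MeasureTheory

theorem norm_sum_mul_le_of_mem_convexBodyAvg {d : ℕ} {α : Type*} [MeasurableSpace α]
    {μ : Measure α} {Q : Set α} {f : α → Fin d → ℂ} (hf : ∀ j, IntegrableOn (fun x => f x j) Q μ)
    {v : Fin d → ℂ} (hv : v ∈ convexBodyAvg μ Q f) (a : Fin d → ℂ) :
    ‖∑ j, a j * v j‖ ≤ (μ Q).toReal⁻¹ * ∫ w in Q, ‖∑ j, a j * f w j‖ ∂μ := by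
  obtain ⟨φ, hφm, hφ1, hv⟩ := hv
  have hF : IntegrableOn (fun w => ∑ j, a j * f w j) Q μ :=
    integrable_finsetSum _ fun j _ => (hf j).const_mul (a j)
  have hφf : ∀ j, IntegrableOn (fun w => φ w * f w j) Q μ := fun j =>
    (hf j).bdd_mul hφm.aestronglyMeasurable (ae_of_all _ hφ1)
  have hsum : ∑ j, a j * v j = ((μ Q).toReal⁻¹ : ℂ) * ∫ w in Q, φ w * ∑ j, a j * f w j ∂μ := by
    calc ∑ j, a j * v j = ∑ j, ((μ Q).toReal⁻¹ : ℂ) * ∫ w in Q, a j * (φ w * f w j) ∂μ :=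
          Finset.sum_congr rfl fun j _ => by rw [hv j, integral_const_mul]; ring
      _ = ((μ Q).toReal⁻¹ : ℂ) * ∫ w in Q, ∑ j, a j * (φ w * f w j) ∂μ := by
          rw [integral_finsetSum _ fun j _ => (hφf j).const_mul (a j), Finset.mul_sum]
      _ = _ := by simp_rw [Finset.mul_sum, mul_left_comm]
  rw [hsum, norm_mul, norm_inv, Complex.norm_real, Real.norm_of_nonneg ENNReal.toReal_nonneg]
  gcongr
  refine norm_integral_le_of_norm_le hF.norm (ae_of_all _ fun w => ?_)
  rw [norm_mul]
  exact mul_le_of_le_one_left (norm_nonneg _) (hφ1 w)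

theorem stmt5_general {d : ℕ} {α : Type*} [MeasurableSpace α] (μ : Measure α)
    (Q : Set α) (hQfin : μ Q < ⊤)
    (f : α → Fin d → ℂ) (hf : ∀ j, IntegrableOn (fun x => f x j) Q μ)
    (g : α → Fin d → ℂ) (hgm : ∀ j, Measurable fun x => g x j)
    (hg : ∀ᵐ x ∂μ.restrict Q, g x ∈ convexBodyAvg μ Q f) :
    ∃ H : α × α → ℂ, Measurable H ∧ (∀ p, ‖H p‖ ≤ (μ Q).toReal⁻¹) ∧
      ∀ᵐ z ∂μ.restrict Q, ∀ j, g z j = ∫ w in Q, H (z, w) * f w j ∂μ := by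
  have : IsFiniteMeasure (μ.restrict Q) := isFiniteMeasure_restrict.2 hQfin.ne
  exact exists_kernel_of_ae_norm_sum_le (inv_nonneg.2 ENNReal.toReal_nonneg) hf
    (fun j => (hgm j).aestronglyMeasurable)
    (hg.mono fun _ hz => norm_sum_mul_le_of_mem_convexBodyAvg hf hz)

/-- If `g(x) ∈ ⟪f⟫_Q` a.e. on `Q`, then there is a measurable kernel `H` on
`Q × Q` with `‖H‖_∞ ≤ |Q|⁻¹` such that `g(z) = ∫_Q H(z,w) f(w) dV(w)` for a.e. `z ∈ Q`. -/
theorem stmt5 {d : ℕ} {α : Type*} [MeasurableSpace α] (μ : Measure α)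
    (Q : Set α) (hQm : MeasurableSet Q) (hQpos : 0 < μ Q) (hQfin : μ Q < ⊤)
    (f : α → Fin d → ℂ) (hf : ∀ j, IntegrableOn (fun x => f x j) Q μ)
    (g : α → Fin d → ℂ) (hgm : ∀ j, Measurable fun x => g x j)
    (hg : ∀ᵐ x ∂μ.restrict Q, g x ∈ convexBodyAvg μ Q f) :
    ∃ H : α × α → ℂ, Measurable H ∧ (∀ p, ‖H p‖ ≤ (μ Q).toReal⁻¹) ∧
      ∀ᵐ z ∂μ.restrict Q, ∀ j, g z j = ∫ w in Q, H (z, w) * f w j ∂μ :=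
  stmt5_general μ Q hQfin f hf g hgm hg
end

section
/- For f ∈ L¹(Q, ℂ^d) with Q of finite positive measure, the convex body average ⟪f⟫_Q = {(1/|Q|)∫_Q φ f dV : ‖φ‖_∞ ≤ 1} is a symmetric, convex, and compact subset of ℂ^d. -/
open MeasureTheory

/-!
Up to the factor `|Q|⁻¹`, `⟪f⟫_Q` is the image of the unit ball of `L^∞` under the linear map
`φ ↦ (∫_Q φ f_j)_j`, so it inherits symmetry and convexity from that ball. For compactness,
reweight `μ|_Q` by the density `‖f‖`: the components of `f / ‖f‖` are bounded, hence lie in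
`L²` of the finite measure `ν = ‖f‖ μ|_Q`, and the pairing is unchanged. By the Riesz
representation, the a.e. unit ball of `L²(ν)` is the set of functionals `Λ` with
`‖Λ u‖ ≤ ‖u‖_{L¹}`, a weak-* closed subset of a norm ball, so it is weak-* compact by
Banach–Alaoglu, and evaluation against the components of `f / ‖f‖` is weak-* continuous.
-/

open ComplexConjugate Pointwise

section UnitBallPairing

variable {α ι : Type*} [MeasurableSpace α]

def unitBallPairing (μ : Measure α) (f : α → ι → ℂ) : Set (ι → ℂ) :=
  {v | ∃ φ : α → ℂ, Measurable φ ∧ (∀ x, ‖φ x‖ ≤ 1) ∧ ∀ j, v j = ∫ x, φ x * f x j ∂μ}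

theorem convexBodyAvg_eq_smul_unitBallPairing {d : ℕ} (μ : Measure α) (Q : Set α)
    (f : α → Fin d → ℂ) :
    convexBodyAvg μ Q f = (μ Q).toReal⁻¹ • unitBallPairing (μ.restrict Q) f := by
  ext v
  constructor
  · rintro ⟨φ, hφ, hφ1, hv⟩
    refine ⟨fun j => ∫ x in Q, φ x * f x j ∂μ, ⟨φ, hφ, hφ1, fun j => rfl⟩, ?_⟩
    ext j
    simp [hv, Complex.real_smul]
  · rintro ⟨w, ⟨φ, hφ, hφ1, hw⟩, rfl⟩
    exact ⟨φ, hφ, hφ1, fun j => by simp [hw, Complex.real_smul]⟩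

variable {μ : Measure α} {f : α → ι → ℂ}

theorem smul_mem_unitBallPairing {c : ℂ} (hc : ‖c‖ ≤ 1) {v : ι → ℂ}
    (hv : v ∈ unitBallPairing μ f) : c • v ∈ unitBallPairing μ f := by
  obtain ⟨φ, hφ, hφ1, hv⟩ := hv
  refine ⟨fun x => c * φ x, hφ.const_mul c, fun x => ?_, fun j => ?_⟩
  · simpa [norm_mul] using mul_le_one₀ hc (norm_nonneg _) (hφ1 x)
  · simp_rw [Pi.smul_apply, smul_eq_mul, hv, mul_assoc, integral_const_mul]

theorem convex_unitBallPairing (hf : ∀ j, Integrable (fun x => f x j) μ) :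
    Convex ℝ (unitBallPairing μ f) := by
  rintro v ⟨φ, hφ, hφ1, hv⟩ w ⟨ψ, hψ, hψ1, hw⟩ a b ha hb hab
  have hint {χ : α → ℂ} (hχ : Measurable χ) (hχ1 : ∀ x, ‖χ x‖ ≤ 1) (j : ι) :
      Integrable (fun x => χ x * f x j) μ :=
    (hf j).bdd_mul hχ.aestronglyMeasurable (.of_forall hχ1)
  refine ⟨fun x => a * φ x + b * ψ x, (hφ.const_mul _).add (hψ.const_mul _), fun x => ?_,
    fun j => ?_⟩
  · calc ‖(a : ℂ) * φ x + b * ψ x‖ ≤ a * 1 + b * 1 := by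
          refine (norm_add_le _ _).trans (add_le_add ?_ ?_) <;>
            simp only [norm_mul, Complex.norm_real, Real.norm_of_nonneg, ha, hb] <;>
            gcongr
          exacts [hφ1 x, hψ1 x]
      _ = 1 := by rw [mul_one, mul_one, hab]
  · simp only [Pi.add_apply, Pi.smul_apply, Complex.real_smul, hv, hw, add_mul, mul_assoc]
    rw [integral_add ((hint hφ hφ1 j).const_mul _) ((hint hψ hψ1 j).const_mul _),
      integral_const_mul, integral_const_mul]

end UnitBallPairing

section L2

variable {α : Type*} [MeasurableSpace α] {μ : Measure α}

theorem L2.inner_eq_integral_conj_mul (F u : Lp ℂ 2 μ) :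
    inner ℂ F u = ∫ x, conj (F x) * u x ∂μ := by
  simp [L2.inner_def, RCLike.inner_apply, mul_comm]

variable [IsFiniteMeasure μ]

theorem L2.forall_norm_inner_le_integral_norm_iff (F : Lp ℂ 2 μ) :
    (∀ u : Lp ℂ 2 μ, ‖inner ℂ F u‖ ≤ ∫ x, ‖u x‖ ∂μ) ↔ ∀ᵐ x ∂μ, ‖F x‖ ≤ 1 := by
  constructor
  · intro hF
    have hF2 : Integrable (fun x => ‖F x‖ ^ 2) μ :=
      (memLp_two_iff_integrable_sq_norm (Lp.aestronglyMeasurable F)).1 (Lp.memLp F)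
    have hF1 : Integrable (fun x => ‖F x‖) μ := ((Lp.memLp F).integrable one_le_two).norm
    -- testing against `1_A F` gives `∫_A ‖F‖² ≤ ∫_A ‖F‖` for every `A`
    have hsq : ∀ᵐ x ∂μ, ‖F x‖ ^ 2 ≤ ‖F x‖ := by
      refine ae_le_of_forall_setIntegral_le hF2 hF1 fun A hA _ => ?_
      have hFA := (Lp.memLp F).indicator hA
      have hinner : inner ℂ F (hFA.toLp _) = ((∫ x in A, ‖F x‖ ^ 2 ∂μ : ℝ) : ℂ) := by
        rw [L2.inner_eq_integral_conj_mul, ← integral_complex_ofReal, ← integral_indicator hA]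
        refine integral_congr_ae ?_
        filter_upwards [hFA.coeFn_toLp] with x hx
        rw [hx]
        by_cases hxA : x ∈ A <;> simp [hxA, Complex.conj_mul']
      have hnorm : ∫ x, ‖(hFA.toLp _ : Lp ℂ 2 μ) x‖ ∂μ = ∫ x in A, ‖F x‖ ∂μ := by
        rw [← integral_indicator hA]
        refine integral_congr_ae ?_
        filter_upwards [hFA.coeFn_toLp] with x hx
        rw [hx, norm_indicator_eq_indicator_norm]
      have := hF (hFA.toLp _)
      rwa [hinner, hnorm, Complex.norm_real, Real.norm_of_nonneg
        (setIntegral_nonneg hA fun x _ => by positivity)] at this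
    filter_upwards [hsq] with x hx
    nlinarith [norm_nonneg (F x)]
  · intro hF u
    rw [L2.inner_eq_integral_conj_mul]
    refine norm_integral_le_of_norm_le ((Lp.memLp u).integrable one_le_two).norm ?_
    filter_upwards [hF] with x hx
    rw [norm_mul, RCLike.norm_conj]
    exact mul_le_of_le_one_left (norm_nonneg _) hx

open InnerProductSpace in
theorem isCompact_toDual_image_ae_norm_le_one :
    IsCompact ((fun F => StrongDual.toWeakDual (toDual ℂ (Lp ℂ 2 μ) F)) ''
      {F : Lp ℂ 2 μ | ∀ᵐ x ∂μ, ‖F x‖ ≤ 1}) := by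
  set R : ℝ := (measureUnivNNReal μ : ℝ) ^ (2⁻¹ : ℝ)
  have hK : IsCompact (WeakDual.toStrongDual ⁻¹' Metric.closedBall 0 R ∩
      ⋂ u : Lp ℂ 2 μ, {Λ : WeakDual ℂ (Lp ℂ 2 μ) | ‖Λ u‖ ≤ ∫ x, ‖u x‖ ∂μ}) :=
    (WeakDual.isCompact_closedBall 0 R).inter_right
      (isClosed_iInter fun u => isClosed_le (WeakDual.eval_continuous u).norm continuous_const)
  convert hK using 1
  ext Λ
  simp only [Set.mem_image, Set.mem_inter_iff, Set.mem_preimage, Set.mem_iInter,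
    mem_closedBall_zero_iff, Set.mem_ofPred_eq]
  constructor
  · rintro ⟨F, hF, rfl⟩
    refine ⟨?_, (L2.forall_norm_inner_le_integral_norm_iff F).2 hF⟩
    simpa [R] using Lp.norm_le_of_ae_bound zero_le_one hF
  · rintro ⟨-, hΛ⟩
    refine ⟨(toDual ℂ _).symm (WeakDual.toStrongDual Λ),
      (L2.forall_norm_inner_le_integral_norm_iff _).1 ?_, ?_⟩
    · simpa [toDual_symm_apply] using hΛ
    · simp

theorem unitBallPairing_eq_image_inner {ι : Type*} {f : α → ι → ℂ}
    (hf : ∀ j, MemLp (fun x => f x j) 2 μ) :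
    unitBallPairing μ f = (fun F j => inner ℂ F ((hf j).toLp _)) ''
      {F : Lp ℂ 2 μ | ∀ᵐ x ∂μ, ‖F x‖ ≤ 1} := by
  ext v
  constructor
  · rintro ⟨φ, hφ, hφ1, hv⟩
    have hc : MemLp (fun x => conj (φ x)) 2 μ :=
      .of_bound (Complex.continuous_conj.measurable.comp hφ).aestronglyMeasurable 1
        (.of_forall fun x => by simpa using hφ1 x)
    refine ⟨hc.toLp _, hc.coeFn_toLp.mono fun x hx => by simpa [hx] using hφ1 x,
      funext fun j => ?_⟩
    dsimp only
    rw [hv, L2.inner_eq_integral_conj_mul]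
    refine integral_congr_ae ?_
    filter_upwards [hc.coeFn_toLp, (hf j).coeFn_toLp] with x hx hfx
    simp [hx, hfx]
  · rintro ⟨F, hF, rfl⟩
    obtain ⟨G, hG, hFG⟩ := (Lp.aestronglyMeasurable F).aemeasurable
    refine ⟨fun x => if ‖G x‖ ≤ 1 then conj (G x) else 0,
      Measurable.ite (measurableSet_le hG.norm measurable_const)
        (Complex.continuous_conj.measurable.comp hG) measurable_const,
      fun x => by dsimp only; split_ifs with h <;> simp [h], fun j => ?_⟩
    dsimp only
    rw [L2.inner_eq_integral_conj_mul]
    refine integral_congr_ae ?_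
    filter_upwards [hF, hFG, (hf j).coeFn_toLp] with x hx hGx hfx
    simp [← hGx, hx, hfx]

theorem isCompact_unitBallPairing_of_memLp {ι : Type*} {f : α → ι → ℂ}
    (hf : ∀ j, MemLp (fun x => f x j) 2 μ) : IsCompact (unitBallPairing μ f) := by
  rw [unitBallPairing_eq_image_inner hf]
  have := isCompact_toDual_image_ae_norm_le_one.image
    (continuous_pi fun j => WeakDual.eval_continuous ((hf j).toLp (fun x => f x j) (μ := μ)))
  rwa [Set.image_image] at this

end L2

section Integrable

variable {α ι : Type*} [MeasurableSpace α] {μ : Measure α}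

theorem unitBallPairing_withDensity {g : α → NNReal} (hg : AEMeasurable g μ) (f : α → ι → ℂ) :
    unitBallPairing (μ.withDensity fun x => g x) f =
      unitBallPairing μ fun x j => (g x : ℝ) • f x j := by
  simp only [unitBallPairing, integral_withDensity_eq_integral_smul₀ hg, ← mul_smul_comm,
    NNReal.smul_def]

theorem isCompact_unitBallPairing [Fintype ι] {f : α → ι → ℂ}
    (hf : ∀ j, Integrable (fun x => f x j) μ) : IsCompact (unitBallPairing μ f) := by
  have hfi : Integrable f μ := .of_eval hf
  set f' : α → ι → ℂ := fun x j => f x j / ‖f x‖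
  have hf' : f = fun x j => (‖f x‖₊ : ℝ) • f' x j := by
    ext x j
    by_cases hx : f x = 0
    · simp [hx]
    · simp [f', Complex.real_smul, mul_div_cancel₀ _ (by simpa using hx : (‖f x‖ : ℂ) ≠ 0)]
  have : IsFiniteMeasure (μ.withDensity fun x => (‖f x‖₊ : ENNReal)) :=
    isFiniteMeasure_withDensity hfi.hasFiniteIntegral.ne
  rw [hf', ← unitBallPairing_withDensity hfi.aestronglyMeasurable.aemeasurable.nnnorm]
  refine isCompact_unitBallPairing_of_memLp fun j => .of_bound ?_ 1 (.of_forall fun x => ?_)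
  · exact (((hf j).aestronglyMeasurable.div₀ (Complex.continuous_ofReal.comp_aestronglyMeasurable
      hfi.aestronglyMeasurable.norm)).mono_ac (withDensity_absolutelyContinuous _ _))
  · simpa [f', norm_div] using div_le_one_of_le₀ (norm_le_pi_norm (f x) j) (norm_nonneg _)

end Integrable

theorem stmt6_general {d : ℕ} {α : Type*} [MeasurableSpace α] (μ : Measure α)
    (Q : Set α) (f : α → Fin d → ℂ) (hf : ∀ j, IntegrableOn (fun x => f x j) Q μ) :
    (∀ lam : ℂ, ‖lam‖ ≤ 1 → ∀ v ∈ convexBodyAvg μ Q f, lam • v ∈ convexBodyAvg μ Q f) ∧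
    Convex ℝ (convexBodyAvg μ Q f) ∧ IsCompact (convexBodyAvg μ Q f) := by
  rw [convexBodyAvg_eq_smul_unitBallPairing]
  refine ⟨?_, (convex_unitBallPairing hf).smul _, (isCompact_unitBallPairing hf).smul _⟩
  rintro lam hlam _ ⟨w, hw, rfl⟩
  rw [smul_comm]
  exact Set.smul_mem_smul_set (smul_mem_unitBallPairing hlam hw)

/-- For `f ∈ L¹(Q, ℂ^d)` (with `Q` of finite positive measure), the convex body
average `⟪f⟫_Q` is symmetric (stable under multiplication by complex scalars of modulus `≤ 1`),
convex, and compact in `ℂ^d`. -/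
theorem stmt6 {d : ℕ} {α : Type*} [MeasurableSpace α] (μ : Measure α)
    (Q : Set α) (hQm : MeasurableSet Q) (hQpos : 0 < μ Q) (hQfin : μ Q < ⊤)
    (f : α → Fin d → ℂ) (hf : ∀ j, IntegrableOn (fun x => f x j) Q μ) :
    (∀ lam : ℂ, ‖lam‖ ≤ 1 → ∀ v ∈ convexBodyAvg μ Q f, lam • v ∈ convexBodyAvg μ Q f) ∧
    Convex ℝ (convexBodyAvg μ Q f) ∧ IsCompact (convexBodyAvg μ Q f) :=
  stmt6_general μ Q f hf
end

section
/- Let 𝒯 be a dyadic family of sets (any two members are nested or disjoint) in a finite measure space, and define the maximal operator M_𝒯 f(z) = sup_{T ∈ 𝒯, z ∈ T} ⟨|f|⟩_T. Then for 1 < p < ∞, ‖M_𝒯 f‖_{L^p} ≤ p' ‖f‖_{L^p}, where p' = p/(p-1). -/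
/-!
The level set `{M f > t}` is the union of the members of `𝒯` on which the average of `|f|`
exceeds `t`; since the inclusion-maximal ones among them are disjoint, this gives the weak-type
bound `t μ {M f > t} ≤ ∫_{M f > t} |f| dμ`. Integrating it against `p t^(p-2) dt` (layer cake)
gives `‖M f‖_p^p ≤ p' ∫ |f| (M f)^(p-1) dμ`, and Hölder's inequality yields
`‖M f‖_p ≤ p' ‖f‖_p`.
-/

open MeasureTheory Set

open scoped ENNReal

namespace MeasureTheory

variable {α ι : Type*} [MeasurableSpace α] {μ ν : Measure α} {T : ι → Set α} {s : ℝ≥0∞}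

/-- Splitting off an inclusion-maximal member, which is disjoint from every member it does not
contain, reduces the union to a smaller one. -/
theorem mul_measure_biUnion_finset_le (hT : ∀ i, MeasurableSet (T i))
    (hd : ∀ i j, T i ⊆ T j ∨ T j ⊆ T i ∨ Disjoint (T i) (T j))
    (hb : ∀ i, s * μ (T i) ≤ ν (T i)) (F : Finset ι) :
    s * μ (⋃ i ∈ F, T i) ≤ ν (⋃ i ∈ F, T i) := by
  classical
  induction F using Finset.strongInduction with
  | H F ih =>
  rcases F.eq_empty_or_nonempty with rfl | hF
  · simp
  obtain ⟨i, hiF, hmax⟩ := F.exists_maximalFor T hF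
  set R := F.filter fun j => ¬T j ⊆ T i
  have hR : R ⊂ F := Finset.filter_ssubset.2 ⟨i, hiF, fun h => h subset_rfl⟩
  have hunion : ⋃ j ∈ F, T j = T i ∪ ⋃ j ∈ R, T j := by
    refine subset_antisymm (iUnion₂_subset fun j hj => ?_) ?_
    · by_cases hji : T j ⊆ T i
      · exact hji.trans subset_union_left
      · exact (subset_biUnion_of_mem (Finset.mem_filter.2 ⟨hj, hji⟩)).trans subset_union_right
    · exact union_subset (subset_biUnion_of_mem hiF)
        (biUnion_mono (fun j hj => (Finset.mem_filter.1 hj).1) fun _ _ => subset_rfl)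
  have hdisj : Disjoint (T i) (⋃ j ∈ R, T j) := by
    refine disjoint_iUnion₂_right.2 fun j hj => ?_
    obtain ⟨hjF, hji⟩ := Finset.mem_filter.1 hj
    rcases hd i j with hij | hji' | hdis
    · exact absurd (hmax hjF hij) hji
    · exact absurd hji' hji
    · exact hdis
  have hRm : MeasurableSet (⋃ j ∈ R, T j) := Finset.measurableSet_biUnion R fun j _ => hT j
  rw [hunion, measure_union hdisj hRm, measure_union hdisj hRm, mul_add]
  exact add_le_add (hb i) (ih R hR)

theorem mul_measure_iUnion_le [Countable ι] (hT : ∀ i, MeasurableSet (T i))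
    (hd : ∀ i j, T i ⊆ T j ∨ T j ⊆ T i ∨ Disjoint (T i) (T j))
    (hb : ∀ i, s * μ (T i) ≤ ν (T i)) :
    s * μ (⋃ i, T i) ≤ ν (⋃ i, T i) := by
  have hmono : Monotone fun F : Finset ι => ⋃ i ∈ F, T i := fun F G hFG =>
    biUnion_mono hFG fun _ _ => subset_rfl
  rw [iUnion_eq_iUnion_finset, hmono.measure_iUnion, ENNReal.mul_iSup]
  exact iSup_le fun F => (mul_measure_biUnion_finset_le hT hd hb F).trans
    (measure_mono (subset_iUnion (fun F : Finset ι => ⋃ i ∈ F, T i) F))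

/-- For `ν = |f| μ` this is the maximal operator `M_𝒯 f`, with values in `ℝ≥0∞`. -/
noncomputable def maximalFunction (μ ν : Measure α) (T : ι → Set α) (x : α) : ℝ≥0∞ :=
  ⨆ i, (T i).indicator (fun _ => ν (T i) / μ (T i)) x

theorem measurable_maximalFunction [Countable ι] (hT : ∀ i, MeasurableSet (T i)) :
    Measurable (maximalFunction μ ν T) :=
  Measurable.iSup fun i => measurable_const.indicator (hT i)

theorem setOf_lt_maximalFunction (s : ℝ≥0∞) :
    {x | s < maximalFunction μ ν T x} = ⋃ i : {i // s < ν (T i) / μ (T i)}, T i := by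
  ext x
  simp only [maximalFunction, mem_ofPred_eq, lt_iSup_iff, mem_iUnion, Subtype.exists, exists_prop]
  refine exists_congr fun i => ?_
  by_cases hx : x ∈ T i <;> simp [hx]

theorem mul_measure_lt_maximalFunction_le [Countable ι] (hT : ∀ i, MeasurableSet (T i))
    (hd : ∀ i j, T i ⊆ T j ∨ T j ⊆ T i ∨ Disjoint (T i) (T j))
    (hpos : ∀ i, μ (T i) ≠ 0) (hfin : ∀ i, μ (T i) ≠ ∞) (s : ℝ≥0∞) :
    s * μ {x | s < maximalFunction μ ν T x} ≤ ν {x | s < maximalFunction μ ν T x} := by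
  rw [setOf_lt_maximalFunction]
  exact mul_measure_iUnion_le (fun i => hT i) (fun i j => hd i j) fun i =>
    (ENNReal.le_div_iff_mul_le (.inl (hpos i)) (.inl (hfin i))).1 i.2.le

theorem measure_eq_top_eq_zero_of_mul_measure_lt_le {F : α → ℝ≥0∞} {C : ℝ≥0∞} (hC : C ≠ ∞)
    (h : ∀ s, s * μ {x | s < F x} ≤ C) : μ {x | F x = ∞} = 0 := by
  set m := μ {x | F x = ∞}
  have hn : ∀ n : ℕ, (n : ℝ≥0∞) * m ≤ C := fun n =>
    (mul_le_mul_right (measure_mono fun x (hx : F x = ∞) => show (n : ℝ≥0∞) < F x by simp [hx])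
      _).trans (h n)
  have hle : ⊤ * m ≤ C := by
    rw [← ENNReal.iSup_natCast, ENNReal.iSup_mul]
    exact iSup_le hn
  by_contra h0
  exact hC (top_le_iff.1 (ENNReal.top_mul h0 ▸ hle))

theorem toReal_maximalFunction (hpos : ∀ i, μ (T i) ≠ 0) (hν : ∀ i, ν (T i) ≠ ∞) (x : α) :
    (maximalFunction μ ν T x).toReal =
      ⨆ i, (T i).indicator (fun _ => (ν (T i) / μ (T i)).toReal) x := by
  rw [maximalFunction, ENNReal.toReal_iSup]
  · refine iSup_congr fun i => ?_
    by_cases hx : x ∈ T i <;> simp [hx]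
  · intro i
    by_cases hx : x ∈ T i <;> simp [hx, ENNReal.div_eq_top, hpos i, hν i]

theorem ae_eq_setOf_lt_toReal {F : α → ℝ≥0∞} (hF : ∀ᵐ x ∂μ, F x ≠ ∞) {t : ℝ} (ht : 0 ≤ t) :
    {x | t < (F x).toReal} =ᵐ[μ] {x | ENNReal.ofReal t < F x} := by
  refine Filter.eventuallyEq_set.2 ?_
  filter_upwards [hF] with x hx
  exact (ENNReal.ofReal_lt_iff_lt_toReal ht hx).symm

theorem mul_measure_lt_toReal_maximalFunction_le [Countable ι] {g : α → ℝ≥0∞}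
    (hT : ∀ i, MeasurableSet (T i)) (hd : ∀ i j, T i ⊆ T j ∨ T j ⊆ T i ∨ Disjoint (T i) (T j))
    (hpos : ∀ i, μ (T i) ≠ 0) (hfin : ∀ i, μ (T i) ≠ ∞) (hg : ∫⁻ x, g x ∂μ ≠ ∞) {t : ℝ}
    (ht : 0 ≤ t) :
    ENNReal.ofReal t * μ {x | t < (maximalFunction μ (μ.withDensity g) T x).toReal} ≤
      ∫⁻ x in {x | t < (maximalFunction μ (μ.withDensity g) T x).toReal}, g x ∂μ := by
  set ν := μ.withDensity g
  set F := maximalFunction μ ν T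
  have hweak := mul_measure_lt_maximalFunction_le (ν := ν) hT hd hpos hfin
  have hνfin : ν univ ≠ ∞ := by rwa [withDensity_apply _ .univ, Measure.restrict_univ]
  -- The two level sets differ only on `{F = ∞}`, null by the weak-type bound as `ν` is finite.
  have hlevel : {x | t < (F x).toReal} =ᵐ[μ] {x | ENNReal.ofReal t < F x} :=
    ae_eq_setOf_lt_toReal (measure_eq_zero_iff_ae_notMem.1
      (measure_eq_top_eq_zero_of_mul_measure_lt_le hνfin fun s =>
        (hweak s).trans (measure_mono (subset_univ _)))) ht
  calc ENNReal.ofReal t * μ {x | t < (F x).toReal}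
      = ENNReal.ofReal t * μ {x | ENNReal.ofReal t < F x} := by rw [measure_congr hlevel]
    _ ≤ ν {x | ENNReal.ofReal t < F x} := hweak _
    _ = ν {x | t < (F x).toReal} :=
        measure_congr ((withDensity_absolutelyContinuous μ g).ae_eq hlevel).symm
    _ = ∫⁻ x in {x | t < (F x).toReal}, g x ∂μ :=
        withDensity_apply _ (measurableSet_lt measurable_const
          (measurable_maximalFunction hT).ennreal_toReal)

end MeasureTheory

theorem ENNReal.rpow_inv_le_of_le_mul_rpow_inv {p q : ℝ} (hpq : p.HolderConjugate q)
    {a b : ℝ≥0∞} (ha : a ≠ ∞) (h : a ≤ b * a ^ q⁻¹) : a ^ p⁻¹ ≤ b := by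
  rcases eq_or_ne a 0 with rfl | ha0
  · simp [ENNReal.zero_rpow_of_pos (inv_pos.2 hpq.pos)]
  have hq0 : a ^ q⁻¹ ≠ 0 := (ENNReal.rpow_pos (pos_iff_ne_zero.2 ha0) ha).ne'
  have hqtop : a ^ q⁻¹ ≠ ∞ := ENNReal.rpow_ne_top_of_nonneg (inv_nonneg.2 hpq.symm.nonneg) ha
  rwa [← ENNReal.mul_le_mul_iff_left hq0 hqtop, ← ENNReal.rpow_add _ _ ha0 ha,
    hpq.inv_add_inv_eq_one, ENNReal.rpow_one]

namespace MeasureTheory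

variable {α : Type*} [MeasurableSpace α] {μ : Measure α} {f : α → ℝ} {g : α → ℝ≥0∞} {p : ℝ}

/-- Layer cake for `μ` and for `μ.withDensity g`, compared level by level through the weak-type
bound `t μ {f > t} ≤ ∫_{f > t} g`. -/
theorem lintegral_rpow_le_mul_lintegral_mul_rpow (hf0 : ∀ x, 0 ≤ f x) (hf : AEMeasurable f μ)
    (hg : AEMeasurable g μ) (hp : 1 < p)
    (hweak : ∀ t > 0, ENNReal.ofReal t * μ {x | t < f x} ≤ ∫⁻ x in {x | t < f x}, g x ∂μ) :
    ∫⁻ x, ENNReal.ofReal (f x ^ p) ∂μ ≤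
      ENNReal.ofReal (p / (p - 1)) * ∫⁻ x, g x * ENNReal.ofReal (f x ^ (p - 1)) ∂μ := by
  set ν := μ.withDensity g
  have hp0 : 0 < p := by linarith
  have hp1 : 0 < p - 1 := by linarith
  have hlevel : ∀ t ∈ Ioi (0 : ℝ), μ {x | t < f x} * ENNReal.ofReal (t ^ (p - 1)) ≤
      ν {x | t < f x} * ENNReal.ofReal (t ^ (p - 1 - 1)) := by
    intro t (ht : 0 < t)
    have hsplit : ENNReal.ofReal (t ^ (p - 1)) =
        ENNReal.ofReal t * ENNReal.ofReal (t ^ (p - 1 - 1)) := by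
      rw [← ENNReal.ofReal_mul ht.le, ← Real.rpow_one_add' ht.le (by linarith)]
      ring_nf
    calc μ {x | t < f x} * ENNReal.ofReal (t ^ (p - 1))
        = ENNReal.ofReal t * μ {x | t < f x} * ENNReal.ofReal (t ^ (p - 1 - 1)) := by
          rw [hsplit]; ring
      _ ≤ ν {x | t < f x} * ENNReal.ofReal (t ^ (p - 1 - 1)) := by
          gcongr
          exact (hweak t ht).trans (withDensity_apply_le g _)
  calc ∫⁻ x, ENNReal.ofReal (f x ^ p) ∂μ
      = ENNReal.ofReal p * ∫⁻ t in Ioi 0, μ {x | t < f x} * ENNReal.ofReal (t ^ (p - 1)) :=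
        lintegral_rpow_eq_lintegral_meas_lt_mul μ (ae_of_all _ hf0) hf hp0
    _ ≤ ENNReal.ofReal p * ∫⁻ t in Ioi 0, ν {x | t < f x} * ENNReal.ofReal (t ^ (p - 1 - 1)) := by
        gcongr ENNReal.ofReal p * ?_
        exact setLIntegral_mono' measurableSet_Ioi hlevel
    _ = ENNReal.ofReal p *
          ((ENNReal.ofReal (p - 1))⁻¹ * ∫⁻ x, ENNReal.ofReal (f x ^ (p - 1)) ∂ν) := by
        rw [lintegral_rpow_eq_lintegral_meas_lt_mul ν (ae_of_all _ hf0)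
          (hf.mono_ac (withDensity_absolutelyContinuous μ g)) hp1, ← mul_assoc (ENNReal.ofReal _)⁻¹,
          ENNReal.inv_mul_cancel (by simpa using hp1) ENNReal.ofReal_ne_top, one_mul]
    _ = ENNReal.ofReal (p / (p - 1)) * ∫⁻ x, g x * ENNReal.ofReal (f x ^ (p - 1)) ∂μ := by
        rw [← mul_assoc, ← ENNReal.ofReal_inv_of_pos hp1, ← ENNReal.ofReal_mul hp0.le,
          ← div_eq_mul_inv,
          lintegral_withDensity_eq_lintegral_mul₀ hg (hf.pow_const _).ennreal_ofReal]
        rfl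

/-- Hölder's inequality bounds `∫ g f^(p-1)` by `‖g‖_p ‖f‖_p^(p-1)`; the a priori finiteness of
`‖f‖_p` lets us divide by `‖f‖_p^(p-1)`. -/
theorem lintegral_rpow_rpow_inv_le_of_mul_measure_lt_le (hf0 : ∀ x, 0 ≤ f x)
    (hf : AEMeasurable f μ) (hg : AEMeasurable g μ) (hp : 1 < p)
    (hweak : ∀ t > 0, ENNReal.ofReal t * μ {x | t < f x} ≤ ∫⁻ x in {x | t < f x}, g x ∂μ)
    (hfp : ∫⁻ x, ENNReal.ofReal (f x ^ p) ∂μ ≠ ∞) :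
    (∫⁻ x, ENNReal.ofReal (f x ^ p) ∂μ) ^ p⁻¹ ≤
      ENNReal.ofReal (p / (p - 1)) * (∫⁻ x, g x ^ p ∂μ) ^ p⁻¹ := by
  have hpq : p.HolderConjugate (p / (p - 1)) := .conjExponent hp
  have hpow : ∀ x, ENNReal.ofReal (f x ^ (p - 1)) ^ (p / (p - 1)) = ENNReal.ofReal (f x ^ p) := by
    intro x
    rw [ENNReal.ofReal_rpow_of_nonneg (Real.rpow_nonneg (hf0 x) _) hpq.symm.nonneg,
      ← Real.rpow_mul (hf0 x), mul_div_cancel₀ _ (by linarith : p - 1 ≠ 0)]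
  have holder := ENNReal.lintegral_mul_le_Lp_mul_Lq μ hpq hg (hf.pow_const (p - 1)).ennreal_ofReal
  simp only [Pi.mul_apply, hpow, one_div] at holder
  refine ENNReal.rpow_inv_le_of_le_mul_rpow_inv hpq hfp ?_
  calc ∫⁻ x, ENNReal.ofReal (f x ^ p) ∂μ
      ≤ ENNReal.ofReal (p / (p - 1)) * ∫⁻ x, g x * ENNReal.ofReal (f x ^ (p - 1)) ∂μ :=
        lintegral_rpow_le_mul_lintegral_mul_rpow hf0 hf hg hp hweak
    _ ≤ ENNReal.ofReal (p / (p - 1)) * ((∫⁻ x, g x ^ p ∂μ) ^ p⁻¹ *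
          (∫⁻ x, ENNReal.ofReal (f x ^ p) ∂μ) ^ (p / (p - 1))⁻¹) := by
        gcongr
    _ = _ := by ring

theorem integral_rpow_rpow_inv_le_of_mul_measure_lt_le {h : α → ℝ} (hf0 : ∀ x, 0 ≤ f x)
    (hf : AEMeasurable f μ) (hh : AEMeasurable h μ) (hp : 1 < p)
    (hweak : ∀ t > 0, ENNReal.ofReal t * μ {x | t < f x} ≤
      ∫⁻ x in {x | t < f x}, ENNReal.ofReal |h x| ∂μ)
    (hfp : Integrable (fun x => f x ^ p) μ) (hhp : Integrable (fun x => |h x| ^ p) μ) :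
    (∫ x, f x ^ p ∂μ) ^ p⁻¹ ≤ p / (p - 1) * (∫ x, |h x| ^ p ∂μ) ^ p⁻¹ := by
  have hp0 : 0 ≤ p := by linarith
  have hA : ∫ x, |h x| ^ p ∂μ = (∫⁻ x, ENNReal.ofReal |h x| ^ p ∂μ).toReal := by
    simp_rw [ENNReal.ofReal_rpow_of_nonneg (abs_nonneg _) hp0]
    exact integral_eq_lintegral_of_nonneg_ae (ae_of_all _ fun x => by positivity) hhp.1
  have hB : ∫ x, f x ^ p ∂μ = (∫⁻ x, ENNReal.ofReal (f x ^ p) ∂μ).toReal :=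
    integral_eq_lintegral_of_nonneg_ae (ae_of_all _ fun x => Real.rpow_nonneg (hf0 x) p) hfp.1
  have hAfin : ∫⁻ x, ENNReal.ofReal |h x| ^ p ∂μ ≠ ∞ := by
    simp_rw [ENNReal.ofReal_rpow_of_nonneg (abs_nonneg _) hp0]
    exact hhp.lintegral_lt_top.ne
  have key := lintegral_rpow_rpow_inv_le_of_mul_measure_lt_le hf0 hf hh.abs.ennreal_ofReal hp hweak
    hfp.lintegral_lt_top.ne
  rw [hA, hB, ENNReal.toReal_rpow, ENNReal.toReal_rpow,
    ← ENNReal.toReal_ofReal (div_nonneg hp0 (by linarith) : 0 ≤ p / (p - 1)), ← ENNReal.toReal_mul]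
  exact ENNReal.toReal_mono (ENNReal.mul_ne_top ENNReal.ofReal_ne_top
    (ENNReal.rpow_ne_top_of_nonneg (by positivity) hAfin)) key

end MeasureTheory

theorem stmt8_general {α ι : Type*} [MeasurableSpace α] [Countable ι] (μ : Measure α)
    (T : ι → Set α) (hTm : ∀ i, MeasurableSet (T i))
    (hTpos : ∀ i, 0 < μ (T i)) (hTfin : ∀ i, μ (T i) < ⊤)
    (hdyadic : ∀ i j, T i ⊆ T j ∨ T j ⊆ T i ∨ Disjoint (T i) (T j))
    (f : α → ℝ) (hfint : Integrable f μ)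
    (p : ℝ) (hp : 1 < p) (hfp : Integrable (fun x => |f x| ^ p) μ)
    (M : α → ℝ)
    (hM : ∀ z, M z = ⨆ i, (T i).indicator
      (fun _ => (μ (T i)).toReal⁻¹ * ∫ x in T i, |f x| ∂μ) z)
    (hMp : Integrable (fun x => M x ^ p) μ) :
    (∫ x, M x ^ p ∂μ) ^ p⁻¹ ≤ (p / (p - 1)) * (∫ x, |f x| ^ p ∂μ) ^ p⁻¹ := by
  set ν := μ.withDensity fun x => ENNReal.ofReal |f x|
  have hfL1 : ∫⁻ x, ENNReal.ofReal |f x| ∂μ ≠ ∞ := hfint.abs.lintegral_lt_top.ne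
  have hνT : ∀ i, ν (T i) ≠ ∞ := fun i => ne_top_of_le_ne_top hfL1
    ((withDensity_apply _ (hTm i)).trans_le (setLIntegral_le_lintegral _ _))
  -- Where the averages are unbounded, the real supremum `M` takes the junk value `0 = ∞.toReal`.
  have hMeq : M = fun x => (maximalFunction μ ν T x).toReal := by
    funext z
    rw [hM, toReal_maximalFunction (fun i => (hTpos i).ne') hνT]
    refine iSup_congr fun i => congrArg (fun c => (T i).indicator (fun _ => c) z) ?_
    rw [withDensity_apply _ (hTm i), ENNReal.toReal_div, inv_mul_eq_div,
      integral_eq_lintegral_of_nonneg_ae (ae_of_all _ fun x => abs_nonneg (f x))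
        hfint.abs.aestronglyMeasurable.restrict]
  subst hMeq
  exact integral_rpow_rpow_inv_le_of_mul_measure_lt_le (fun x => ENNReal.toReal_nonneg)
    (measurable_maximalFunction hTm).ennreal_toReal.aemeasurable hfint.aemeasurable hp
    (fun t ht => mul_measure_lt_toReal_maximalFunction_le hTm hdyadic (fun i => (hTpos i).ne')
      (fun i => (hTfin i).ne) hfL1 ht.le) hMp hfp

/-- For a dyadic family `𝒯` (any two members nested or disjoint) in a finite
measure space, the dyadic maximal operator `M_𝒯 f = sup_{T ∋ z} ⟨|f|⟩_T` satisfies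
`‖M_𝒯 f‖_{L^p} ≤ p' ‖f‖_{L^p}` for `1 < p < ∞`, `p' = p/(p-1)`. -/
theorem stmt8 {α ι : Type*} [MeasurableSpace α] [Countable ι] (μ : Measure α)
    [IsFiniteMeasure μ]
    (T : ι → Set α) (hTm : ∀ i, MeasurableSet (T i))
    (hTpos : ∀ i, 0 < μ (T i)) (hTfin : ∀ i, μ (T i) < ⊤)
    (hdyadic : ∀ i j, T i ⊆ T j ∨ T j ⊆ T i ∨ Disjoint (T i) (T j))
    (f : α → ℝ) (hfint : Integrable f μ)
    (p : ℝ) (hp : 1 < p) (hfp : Integrable (fun x => |f x| ^ p) μ)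
    (M : α → ℝ)
    (hM : ∀ z, M z = ⨆ i, (T i).indicator
      (fun _ => (μ (T i)).toReal⁻¹ * ∫ x in T i, |f x| ∂μ) z)
    (hMp : Integrable (fun x => M x ^ p) μ) :
    (∫ x, M x ^ p ∂μ) ^ p⁻¹ ≤ (p / (p - 1)) * (∫ x, |f x| ^ p ∂μ) ^ p⁻¹ :=
  stmt8_general μ T hTm hTpos hTfin hdyadic f hfint p hp hfp M hM hMp
end

section
/- Let ω be a nonnegative weight satisfying the reverse Hölder inequality ⟨ω^r⟩_T^{1/r} ≤ C⟨ω⟩_T for all T in a dyadic family 𝒯, with r−1 ≈ B^{-1} for some B ≥ 1. If S g(z) = Σ_{T∈𝒯} ⟨|g|^{(2r)'}⟩_T^{1/(2r)'} 1_{K_T}(z) with pairwise disjoint kubes K_T ⊆ T, |K_T| ≈ |T|, then ‖Sg‖²_{L²} ≲ (p')^p ‖g‖²_{L²} where p = 2/(2r)', and (p')^p ≲ (r−1)^{-1} ≈ B. -/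
open MeasureTheory Set
open scoped ENNReal

set_option linter.unusedSectionVars false
set_option maxHeartbeats 1000000

section Aux

variable {α : Type} [MeasurableSpace α] {ι : Type}

lemma exists_max_tent (T : ι → Set α) :
    ∀ F : Finset ι, F.Nonempty → ∃ m ∈ F, ∀ i ∈ F, ¬ T m ⊂ T i := by
  classical
  intro F
  induction F using Finset.induction_on with
  | empty => intro h; simp at h
  | insert _ _ ha ih =>
    rename_i a F'
    intro _
    rcases F'.eq_empty_or_nonempty with h0 | hne
    · subst h0
      refine ⟨a, Finset.mem_insert_self _ _, ?_⟩
      intro i hi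
      simp only [Finset.mem_insert, Finset.notMem_empty, or_false] at hi
      subst hi; exact fun h => ssubset_irrefl _ h
    · obtain ⟨m, hmF, hmax⟩ := ih hne
      by_cases hc : T m ⊂ T a
      · refine ⟨a, Finset.mem_insert_self _ _, ?_⟩
        intro i hi hTa
        rcases Finset.mem_insert.1 hi with rfl | hi
        · exact ssubset_irrefl _ hTa
        · exact hmax i hi (hc.trans hTa)
      · refine ⟨m, Finset.mem_insert_of_mem hmF, ?_⟩
        intro i hi
        rcases Finset.mem_insert.1 hi with rfl | hi
        · exact hc
        · exact hmax i hi

lemma tent_cover (μ ν : Measure α) (T : ι → Set α) (hTm : ∀ i, MeasurableSet (T i))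
    (hnest : ∀ i j, T i ⊆ T j ∨ T j ⊆ T i ∨ Disjoint (T i) (T j)) (lam : ℝ≥0∞) :
    ∀ F : Finset ι, (∀ i ∈ F, lam * μ (T i) ≤ ν (T i)) →
      lam * μ (⋃ i ∈ F, T i) ≤ ν (⋃ i ∈ F, T i) := by
  classical
  intro F
  induction F using Finset.strongInduction with
  | _ F ih =>
    intro hF
    rcases F.eq_empty_or_nonempty with rfl | hne
    · simp
    · obtain ⟨m, hmF, hmax⟩ := exists_max_tent T F hne
      set F₂ := F.filter (fun i => ¬ T i ⊆ T m) with hF₂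
      have hsub : F₂ ⊆ F := Finset.filter_subset _ _
      have hmne : m ∉ F₂ := by simp [hF₂]
      have hss : F₂ ⊂ F := (Finset.ssubset_iff_of_subset hsub).2 ⟨m, hmF, hmne⟩
      have hdisj : Disjoint (T m) (⋃ i ∈ F₂, T i) := by
        refine Set.disjoint_iUnion₂_right.2 fun i hi => ?_
        have hiT : ¬ T i ⊆ T m := (Finset.mem_filter.1 hi).2
        rcases hnest i m with h | h | h
        · exact absurd h hiT
        · rcases h.ssubset_or_eq with hs | he
          · exact absurd hs (hmax i (hsub hi))
          · exact absurd he.symm.subset hiT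
        · exact h.symm
      have hunion : ⋃ i ∈ F, T i = T m ∪ ⋃ i ∈ F₂, T i := by
        apply Set.Subset.antisymm
        · intro x hx
          rcases Set.mem_iUnion₂.1 hx with ⟨i, hi, hxi⟩
          by_cases hiT : T i ⊆ T m
          · exact Set.mem_union_left _ (hiT hxi)
          · exact Set.mem_union_right _
              (Set.mem_iUnion₂.2 ⟨i, Finset.mem_filter.2 ⟨hi, hiT⟩, hxi⟩)
        · refine Set.union_subset (Set.subset_biUnion_of_mem hmF) ?_
          intro x hx
          rcases Set.mem_iUnion₂.1 hx with ⟨i, hi, hxi⟩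
          exact Set.mem_iUnion₂.2 ⟨i, hsub hi, hxi⟩
      have hmeas2 : MeasurableSet (⋃ i ∈ F₂, T i) :=
        Finset.measurableSet_biUnion _ (fun i _ => hTm i)
      calc lam * μ (⋃ i ∈ F, T i) ≤ lam * (μ (T m) + μ (⋃ i ∈ F₂, T i)) := by
            rw [hunion]; exact mul_le_mul_right (measure_union_le _ _) _
        _ = lam * μ (T m) + lam * μ (⋃ i ∈ F₂, T i) := mul_add _ _ _
        _ ≤ ν (T m) + ν (⋃ i ∈ F₂, T i) :=
            add_le_add (hF m hmF) (ih F₂ hss (fun i hi => hF i (hsub hi)))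
        _ = ν (T m ∪ ⋃ i ∈ F₂, T i) := (measure_union hdisj hmeas2).symm
        _ = ν (⋃ i ∈ F, T i) := by rw [hunion]

lemma tent_cover' [Countable ι] (μ ν : Measure α) (T : ι → Set α)
    (hTm : ∀ i, MeasurableSet (T i))
    (hnest : ∀ i j, T i ⊆ T j ∨ T j ⊆ T i ∨ Disjoint (T i) (T j)) (lam : ℝ≥0∞)
    (s : Set ι) (hs : ∀ i ∈ s, lam * μ (T i) ≤ ν (T i)) :
    lam * μ (⋃ i ∈ s, T i) ≤ ν (⋃ i ∈ s, T i) := by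
  classical
  have hU : (⋃ i ∈ s, T i) = ⋃ F : Finset s, ⋃ i ∈ F, T i.1 := by
    ext x; constructor
    · intro hx
      rcases Set.mem_iUnion₂.1 hx with ⟨i, hi, hxi⟩
      exact Set.mem_iUnion.2 ⟨{⟨i, hi⟩}, by simpa using hxi⟩
    · intro hx
      rcases Set.mem_iUnion.1 hx with ⟨F, hxF⟩
      rcases Set.mem_iUnion₂.1 hxF with ⟨j, _, hxj⟩
      exact Set.mem_iUnion₂.2 ⟨j.1, j.2, hxj⟩
  have hdir : Directed (· ⊆ ·) (fun F : Finset s => ⋃ i ∈ F, T i.1) := by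
    intro F G
    refine ⟨F ∪ G, ?_, ?_⟩ <;>
    · intro x hx
      rcases Set.mem_iUnion₂.1 hx with ⟨j, hj, hxj⟩
      exact Set.mem_iUnion₂.2 ⟨j, by simp [Finset.mem_union, hj], hxj⟩
  rw [hU, hdir.measure_iUnion, ENNReal.mul_iSup]
  refine iSup_le fun F => ?_
  calc lam * μ (⋃ i ∈ F, T i.1) ≤ ν (⋃ i ∈ F, T i.1) :=
        tent_cover μ ν (fun j : s => T j.1) (fun j => hTm j.1)
          (fun j k => hnest j.1 k.1) lam F (fun j _ => hs j.1 j.2)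
    _ ≤ ν (⋃ F : Finset s, ⋃ i ∈ F, T i.1) := measure_mono (Set.subset_iUnion (fun F : Finset s => ⋃ i ∈ F, T i.1) F)

lemma doob_tree [Countable ι] (μ : Measure α) [IsFiniteMeasure μ]
    (T : ι → Set α) (hTm : ∀ i, MeasurableSet (T i))
    (hnest : ∀ i j, T i ⊆ T j ∨ T j ⊆ T i ∨ Disjoint (T i) (T j))
    (H : α → ℝ≥0∞) (hH : AEMeasurable H μ) (p : ℝ) (hp : 1 < p) :
    ∫⁻ x, (⨆ i, (T i).indicator
        (fun _ => μ.withDensity H (T i) / μ (T i)) x) ^ p ∂μ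
      ≤ ENNReal.ofReal ((p / (p - 1)) ^ p) * ∫⁻ x, H x ^ p ∂μ := by
  classical
  set ν := μ.withDensity H with hν
  set A : ι → ℝ≥0∞ := fun i => ν (T i) / μ (T i) with hA
  set M : α → ℝ≥0∞ := fun x => ⨆ i, (T i).indicator (fun _ => A i) x with hMdef
  have hMmeas : Measurable M :=
    Measurable.iSup fun i => measurable_const.indicator (hTm i)
  -- weak type (1,1) with constant 1
  have weak : ∀ t : ℝ≥0∞, t * μ {x | t < M x} ≤ ν {x | t < M x} := by
    intro t
    have hset : {x | t < M x} = ⋃ i ∈ {i : ι | t < A i}, T i := by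
      ext x
      simp only [Set.mem_setOf_eq, hMdef, lt_iSup_iff, Set.mem_iUnion]
      constructor
      · rintro ⟨i, hi⟩
        by_cases hx : x ∈ T i
        · rw [Set.indicator_of_mem hx] at hi; exact ⟨i, hi, hx⟩
        · rw [Set.indicator_of_notMem hx] at hi
          exact absurd hi (by simp)
      · rintro ⟨i, hi, hx⟩
        exact ⟨i, by rwa [Set.indicator_of_mem hx]⟩
    rw [hset]
    refine tent_cover' μ ν T hTm hnest t _ (fun i hi => ?_)
    have hi' : t < ν (T i) / μ (T i) := hi
    exact ENNReal.mul_le_of_le_div hi'.le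
  -- the truncated estimate
  have key : ∀ N : ℕ, ∫⁻ x, (min (M x) N) ^ p ∂μ
      ≤ ENNReal.ofReal ((p / (p - 1)) ^ p) * ∫⁻ x, H x ^ p ∂μ := by
    intro N
    set MN : α → ℝ≥0∞ := fun x => min (M x) N with hMN
    have hMNmeas : Measurable MN := hMmeas.min measurable_const
    have hMNlt : ∀ x, MN x < ⊤ :=
      fun x => lt_of_le_of_lt (min_le_right _ _) (ENNReal.natCast_lt_top N)
    set m : α → ℝ := fun x => (MN x).toReal with hm
    have hmmeas : Measurable m := hMNmeas.ennreal_toReal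
    have hmnn : ∀ x, 0 ≤ m x := fun x => ENNReal.toReal_nonneg
    have hmN : ∀ x, m x ≤ N := by
      intro x
      have h1 : MN x ≤ (N : ℝ≥0∞) := min_le_right _ _
      have := ENNReal.toReal_mono (ENNReal.natCast_ne_top N) h1
      simpa using this
    have hofm : ∀ x, ENNReal.ofReal (m x) = MN x :=
      fun x => ENNReal.ofReal_toReal (hMNlt x).ne
    set X := ∫⁻ x, ENNReal.ofReal (m x ^ p) ∂μ with hX
    have hXid : (∫⁻ x, MN x ^ p ∂μ) = X := by
      refine lintegral_congr fun x => ?_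
      show MN x ^ p = ENNReal.ofReal ((MN x).toReal ^ p)
      rw [ENNReal.toReal_rpow, ENNReal.ofReal_toReal]
      exact (ENNReal.rpow_lt_top_of_nonneg (by linarith) (hMNlt x).ne).ne
    rw [hXid]
    -- layer cake for X
    have hint1 : ∀ t > (0:ℝ), IntervalIntegrable (fun s : ℝ => s ^ (p - 1)) volume 0 t :=
      fun t _ => intervalIntegral.intervalIntegrable_rpow' (by linarith)
    have hgnn1 : ∀ᵐ t ∂(volume.restrict (Set.Ioi (0:ℝ))), 0 ≤ t ^ (p - 1) := by
      filter_upwards [ae_restrict_mem measurableSet_Ioi] with t ht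
      exact Real.rpow_nonneg ht.le _
    have lc1 := lintegral_comp_eq_lintegral_meas_lt_mul μ
      (Filter.Eventually.of_forall hmnn) hmmeas.aemeasurable hint1 hgnn1
    have hXeq : X = ENNReal.ofReal p *
        ∫⁻ t in Set.Ioi (0:ℝ), μ {a | t < m a} * ENNReal.ofReal (t ^ (p - 1)) := by
      rw [← lc1, ← lintegral_const_mul' _ _ ENNReal.ofReal_ne_top]
      refine lintegral_congr fun x => ?_
      rw [integral_rpow (Or.inl (by linarith : (-1:ℝ) < p - 1))]
      rw [← ENNReal.ofReal_mul (by linarith : (0:ℝ) ≤ p)]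
      congr 1
      have h1 : p - 1 + 1 = p := by ring
      rw [h1, Real.zero_rpow (by linarith : p ≠ 0)]
      have h2 : p ≠ 0 := by linarith
      field_simp
      simp
    -- weak-type estimate pointwise in t
    have weakN : ∀ t : ℝ, 0 < t →
        μ {a | t < m a} * ENNReal.ofReal (t ^ (p - 1))
          ≤ ν {a | t < m a} * ENNReal.ofReal (t ^ (p - 2)) := by
      intro t ht
      have hts : {a | t < m a} = {x | ENNReal.ofReal t < MN x} := by
        ext x
        simp only [Set.mem_setOf_eq, hm]
        rw [ENNReal.ofReal_lt_iff_lt_toReal ht.le (hMNlt x).ne]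
      have hsplit : ENNReal.ofReal t * ENNReal.ofReal (t ^ (p - 2))
          = ENNReal.ofReal (t ^ (p - 1)) := by
        rw [← ENNReal.ofReal_mul ht.le]
        congr 1
        rw [show p - 1 = 1 + (p - 2) by ring, Real.rpow_add ht, Real.rpow_one]
      by_cases hN : ENNReal.ofReal t < (N : ℝ≥0∞)
      · have hsame : {x | ENNReal.ofReal t < MN x} = {x | ENNReal.ofReal t < M x} := by
          ext x; simp [hMN, lt_min_iff, hN]
        have hw := weak (ENNReal.ofReal t)
        calc μ {a | t < m a} * ENNReal.ofReal (t ^ (p - 1))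
            = (ENNReal.ofReal t * μ {x | ENNReal.ofReal t < M x}) * ENNReal.ofReal (t ^ (p - 2)) := by
              rw [hts, hsame, ← hsplit]; ring
          _ ≤ ν {x | ENNReal.ofReal t < M x} * ENNReal.ofReal (t ^ (p - 2)) :=
              mul_le_mul_left hw _
          _ = ν {a | t < m a} * ENNReal.ofReal (t ^ (p - 2)) := by rw [hts, hsame]
      · have hempty : {x | ENNReal.ofReal t < MN x} = ∅ := by
          ext x
          simp only [Set.mem_setOf_eq, Set.mem_empty_iff_false, iff_false, not_lt]
          exact le_trans (min_le_right _ _) (le_of_not_gt hN)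
        rw [hts, hempty]
        simp
    have hX2 : X ≤ ENNReal.ofReal p *
        ∫⁻ t in Set.Ioi (0:ℝ), ν {a | t < m a} * ENNReal.ofReal (t ^ (p - 2)) := by
      rw [hXeq]
      refine mul_le_mul_right (lintegral_mono_ae ?_) _
      filter_upwards [ae_restrict_mem measurableSet_Ioi] with t ht
      exact weakN t ht
    -- layer cake for the ν-integral
    have hint2 : ∀ t > (0:ℝ), IntervalIntegrable (fun s : ℝ => s ^ (p - 2)) volume 0 t :=
      fun t _ => intervalIntegral.intervalIntegrable_rpow' (by linarith)
    have hgnn2 : ∀ᵐ t ∂(volume.restrict (Set.Ioi (0:ℝ))), 0 ≤ t ^ (p - 2) := by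
      filter_upwards [ae_restrict_mem measurableSet_Ioi] with t ht
      exact Real.rpow_nonneg ht.le _
    have lc2 := lintegral_comp_eq_lintegral_meas_lt_mul ν
      (Filter.Eventually.of_forall hmnn) hmmeas.aemeasurable hint2 hgnn2
    have hB : (∫⁻ x, ENNReal.ofReal (m x ^ (p - 1)) ∂ν)
        = ENNReal.ofReal (p - 1) *
          ∫⁻ t in Set.Ioi (0:ℝ), ν {a | t < m a} * ENNReal.ofReal (t ^ (p - 2)) := by
      rw [← lc2, ← lintegral_const_mul' _ _ ENNReal.ofReal_ne_top]
      refine lintegral_congr fun x => ?_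
      rw [integral_rpow (Or.inl (by linarith : (-1:ℝ) < p - 2))]
      rw [← ENNReal.ofReal_mul (by linarith : (0:ℝ) ≤ p - 1)]
      congr 1
      have h1 : p - 2 + 1 = p - 1 := by ring
      rw [h1, Real.zero_rpow (by linarith : p - 1 ≠ 0)]
      have h2 : p - 1 ≠ 0 := by linarith
      field_simp
      simp
    have hp1ne : ENNReal.ofReal (p - 1) ≠ 0 := by
      simp only [ne_eq, ENNReal.ofReal_eq_zero, not_le]; linarith
    have hX3 : X ≤ ENNReal.ofReal p * (ENNReal.ofReal (p - 1))⁻¹ *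
        ∫⁻ x, ENNReal.ofReal (m x ^ (p - 1)) ∂ν := by
      calc X ≤ ENNReal.ofReal p *
          ∫⁻ t in Set.Ioi (0:ℝ), ν {a | t < m a} * ENNReal.ofReal (t ^ (p - 2)) := hX2
        _ = ENNReal.ofReal p * ((ENNReal.ofReal (p - 1))⁻¹ *
            (ENNReal.ofReal (p - 1) *
              ∫⁻ t in Set.Ioi (0:ℝ), ν {a | t < m a} * ENNReal.ofReal (t ^ (p - 2)))) := by
            rw [← mul_assoc (ENNReal.ofReal (p-1))⁻¹,
              ENNReal.inv_mul_cancel hp1ne ENNReal.ofReal_ne_top, one_mul]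
        _ = ENNReal.ofReal p * (ENNReal.ofReal (p - 1))⁻¹ *
            ∫⁻ x, ENNReal.ofReal (m x ^ (p - 1)) ∂ν := by rw [hB]; ring
    -- withDensity
    have hBmu : (∫⁻ x, ENNReal.ofReal (m x ^ (p - 1)) ∂ν)
        = ∫⁻ x, H x * ENNReal.ofReal (m x ^ (p - 1)) ∂μ := by
      have hme : Measurable fun x => ENNReal.ofReal (m x ^ (p - 1)) :=
        (((Real.continuous_rpow_const (by linarith : (0:ℝ) ≤ p - 1)).measurable.comp
          hmmeas)).ennreal_ofReal
      rw [hν, lintegral_withDensity_eq_lintegral_mul₀ hH hme.aemeasurable]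
      rfl
    -- Hölder
    set q' : ℝ := p / (p - 1) with hq'
    have hq'pos : 0 < q' := by
      rw [hq']; exact div_pos (by linarith) (by linarith)
    have hpq : p.HolderConjugate q' := by
      refine Real.holderConjugate_iff.mpr ⟨hp, ?_⟩
      rw [hq']
      have h1 : p ≠ 0 := by linarith
      have h2 : p - 1 ≠ 0 := by linarith
      field_simp
      ring
    have hgq : ∀ x, (ENNReal.ofReal (m x ^ (p - 1))) ^ q' = ENNReal.ofReal (m x ^ p) := by
      intro x
      rw [ENNReal.ofReal_rpow_of_nonneg (Real.rpow_nonneg (hmnn x) _) hq'pos.le]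
      congr 1
      rw [← Real.rpow_mul (hmnn x)]
      congr 1
      have h2 : p - 1 ≠ 0 := by linarith
      rw [hq']; field_simp
    have holder : (∫⁻ x, H x * ENNReal.ofReal (m x ^ (p - 1)) ∂μ)
        ≤ (∫⁻ x, H x ^ p ∂μ) ^ (1 / p) * X ^ (1 / q') := by
      have h := ENNReal.lintegral_mul_le_Lp_mul_Lq μ hpq hH
        ((((Real.continuous_rpow_const (by linarith : (0:ℝ) ≤ p - 1)).measurable.comp
          hmmeas)).ennreal_ofReal.aemeasurable)
      calc (∫⁻ x, H x * ENNReal.ofReal (m x ^ (p - 1)) ∂μ)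
          ≤ (∫⁻ x, H x ^ p ∂μ) ^ (1 / p) *
            (∫⁻ x, (ENNReal.ofReal (m x ^ (p - 1))) ^ q' ∂μ) ^ (1 / q') := h
        _ = (∫⁻ x, H x ^ p ∂μ) ^ (1 / p) * X ^ (1 / q') := by
            rw [hX, lintegral_congr hgq]
    have hXlt : X < ⊤ := by
      have : X ≤ ∫⁻ _, ENNReal.ofReal ((N:ℝ) ^ p) ∂μ := by
        refine lintegral_mono fun x => ENNReal.ofReal_le_ofReal ?_
        exact Real.rpow_le_rpow (hmnn x) (hmN x) (by linarith)
      refine lt_of_le_of_lt this ?_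
      rw [lintegral_const]
      exact ENNReal.mul_lt_top ENNReal.ofReal_lt_top (measure_lt_top μ _)
    -- conclude
    have hcne : ENNReal.ofReal ((p / (p - 1)) ^ p) ≠ 0 := by
      simp only [ne_eq, ENNReal.ofReal_eq_zero, not_le]
      have : (0:ℝ) < p / (p - 1) := div_pos (by linarith) (by linarith)
      positivity
    by_cases hHtop : (∫⁻ x, H x ^ p ∂μ) = ⊤
    · rw [hHtop, ENNReal.mul_top hcne]
      exact le_top
    by_cases hX0 : X = 0
    · rw [hX0]; exact zero_le
    have hcomb : X ≤ ENNReal.ofReal q' * ((∫⁻ x, H x ^ p ∂μ) ^ (1 / p) * X ^ (1 / q')) := by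
      calc X ≤ ENNReal.ofReal p * (ENNReal.ofReal (p - 1))⁻¹ *
            ∫⁻ x, ENNReal.ofReal (m x ^ (p - 1)) ∂ν := hX3
        _ = ENNReal.ofReal q' * ∫⁻ x, H x * ENNReal.ofReal (m x ^ (p - 1)) ∂μ := by
            rw [hBmu, hq', div_eq_mul_inv, ENNReal.ofReal_mul (by linarith : (0:ℝ) ≤ p),
              ENNReal.ofReal_inv_of_pos (by linarith : (0:ℝ) < p - 1)]
        _ ≤ ENNReal.ofReal q' * ((∫⁻ x, H x ^ p ∂μ) ^ (1 / p) * X ^ (1 / q')) :=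
            mul_le_mul_right holder _
    have hXq' : X ^ (1 / q') ≠ 0 := by
      simp only [ne_eq, ENNReal.rpow_eq_zero_iff, not_or]
      constructor
      · rintro ⟨h, -⟩; exact hX0 h
      · rintro ⟨h, -⟩; exact hXlt.ne h
    have h1q'pos : 0 < 1 / q' := by positivity
    have hXq'top : X ^ (1 / q') ≠ ⊤ :=
      (ENNReal.rpow_lt_top_of_nonneg h1q'pos.le hXlt.ne).ne
    have hXsplit : X = X ^ (1 / p) * X ^ (1 / q') := by
      rw [← ENNReal.rpow_add _ _ hX0 hXlt.ne, one_div, one_div, hpq.inv_add_inv_eq_one,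
        ENNReal.rpow_one]
    -- cancel X ^ (1/q')
    have hXp : X ^ (1 / p) ≤ ENNReal.ofReal q' * (∫⁻ x, H x ^ p ∂μ) ^ (1 / p) := by
      have h1 : X ^ (1 / p) * X ^ (1 / q')
          ≤ (ENNReal.ofReal q' * (∫⁻ x, H x ^ p ∂μ) ^ (1 / p)) * X ^ (1 / q') := by
        rw [← hXsplit]
        calc X ≤ ENNReal.ofReal q' * ((∫⁻ x, H x ^ p ∂μ) ^ (1 / p) * X ^ (1 / q')) := hcomb
          _ = ENNReal.ofReal q' * (∫⁻ x, H x ^ p ∂μ) ^ (1 / p) * X ^ (1 / q') := by ring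
      exact (ENNReal.mul_le_mul_iff_left hXq' hXq'top).1 h1
    -- raise to the p-th power
    have hfin : X ≤ ENNReal.ofReal ((p / (p - 1)) ^ p) * ∫⁻ x, H x ^ p ∂μ := by
      have h2 := ENNReal.rpow_le_rpow hXp (by linarith : (0:ℝ) ≤ p)
      have h3 : (X ^ (1 / p)) ^ p = X := by
        rw [← ENNReal.rpow_mul, one_div, inv_mul_cancel₀ (by linarith : p ≠ 0),
          ENNReal.rpow_one]
      have h4 : (ENNReal.ofReal q' * (∫⁻ x, H x ^ p ∂μ) ^ (1 / p)) ^ p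
          = ENNReal.ofReal ((p / (p - 1)) ^ p) * ∫⁻ x, H x ^ p ∂μ := by
        rw [ENNReal.mul_rpow_of_nonneg _ _ (by linarith : (0:ℝ) ≤ p)]
        congr 1
        · rw [ENNReal.ofReal_rpow_of_nonneg (le_of_lt hq'pos) (by linarith : (0:ℝ) ≤ p)]
        · rw [← ENNReal.rpow_mul, one_div, inv_mul_cancel₀ (by linarith : p ≠ 0),
            ENNReal.rpow_one]
      rw [h3, h4] at h2
      exact h2
    exact hfin
  -- pass to the supremum in N
  have hmono : Monotone (fun N : ℕ => fun x => (min (M x) N) ^ p) := by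
    intro N N' hNN'
    intro x
    refine ENNReal.rpow_le_rpow (min_le_min le_rfl ?_) (by linarith : (0:ℝ) ≤ p)
    exact_mod_cast Nat.cast_le.2 hNN'
  have hsup : ∀ x, (⨆ N : ℕ, (min (M x) N) ^ p) = M x ^ p := by
    intro x
    refine le_antisymm (iSup_le fun N => ENNReal.rpow_le_rpow (min_le_left _ _)
      (by linarith : (0:ℝ) ≤ p)) ?_
    rcases eq_or_ne (M x) ⊤ with htop | hne
    · rw [htop, ENNReal.top_rpow_of_pos (by linarith : (0:ℝ) < p)]
      refine le_of_eq_of_le ENNReal.iSup_natCast.symm (iSup_mono fun N => ?_)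
      rw [min_eq_right (le_top : (N:ℝ≥0∞) ≤ ⊤)]
      rcases Nat.eq_zero_or_pos N with rfl | hN
      · simp only [Nat.cast_zero]; exact zero_le
      · have h1 : (1:ℝ≥0∞) ≤ (N:ℝ≥0∞) := by exact_mod_cast hN
        calc (N:ℝ≥0∞) = (N:ℝ≥0∞) ^ (1:ℝ) := (ENNReal.rpow_one _).symm
          _ ≤ (N:ℝ≥0∞) ^ p := ENNReal.rpow_le_rpow_of_exponent_le h1 (by linarith)
    · obtain ⟨N, hN⟩ := ENNReal.exists_nat_gt hne
      exact le_iSup_of_le N (le_of_eq (by rw [min_eq_left hN.le]))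
  calc ∫⁻ x, M x ^ p ∂μ = ∫⁻ x, ⨆ N : ℕ, (min (M x) N) ^ p ∂μ := by
        refine lintegral_congr fun x => (hsup x).symm
    _ = ⨆ N : ℕ, ∫⁻ x, (min (M x) N) ^ p ∂μ := by
        refine lintegral_iSup (fun N => ?_) (fun N N' h => fun x => hmono h x)
        exact (hMmeas.min measurable_const).pow_const p
    _ ≤ ENNReal.ofReal ((p / (p - 1)) ^ p) * ∫⁻ x, H x ^ p ∂μ := iSup_le key

end Aux

/-- For `1 < r ≤ 2`, `q = (2r)' = 2r/(2r-1)`, `p = 2/q`, the square-type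
operator `S g = Σ_i ⟨|g|^q⟩_{T_i}^{1/q} 1_{K_i}` (with pairwise disjoint kubes `K_i ⊆ T_i`,
`|T_i| ≤ c₀|K_i|`, dyadic tents) satisfies `‖Sg‖²_{L²} ≲ c₀ (p')^p ‖g‖²_{L²}` and
`(p')^p ≲ (r-1)⁻¹`, so that `∫ (Sg)² ≤ C c₀ (r-1)⁻¹ ∫ g²`. -/
theorem stmt13 :
    ∃ C : ℝ, 0 < C ∧
      ∀ r : ℝ, 1 < r → r ≤ 2 →
      ∀ c₀ : ℝ, 1 ≤ c₀ →
      ∀ (α : Type) [MeasurableSpace α] (μ : Measure α) [IsFiniteMeasure μ]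
        (ι : Type) [Countable ι] (T K : ι → Set α),
        (∀ i, MeasurableSet (T i)) → (∀ i, MeasurableSet (K i)) →
        (∀ i, K i ⊆ T i) → Pairwise (Function.onFun Disjoint K) →
        (∀ i, 0 < μ (T i)) → (∀ i, μ (T i) < ⊤) →
        (∀ i, μ (T i) ≤ ENNReal.ofReal c₀ * μ (K i)) →
        (∀ i j, T i ⊆ T j ∨ T j ⊆ T i ∨ Disjoint (T i) (T j)) →
        ∀ g S : α → ℝ, Integrable (fun x => g x ^ 2) μ →
          (∀ z, S z = ∑' i, (K i).indicator
            (fun _ => ((μ (T i)).toReal⁻¹ *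
              ∫ x in T i, |g x| ^ ((2 * r) / (2 * r - 1)) ∂μ) ^ ((2 * r - 1) / (2 * r))) z) →
          Integrable (fun x => S x ^ 2) μ →
          ∫ x, S x ^ 2 ∂μ ≤ C * c₀ * (r - 1)⁻¹ * ∫ x, g x ^ 2 ∂μ := by
  classical
  refine ⟨27, by norm_num, ?_⟩
  intro r hr hr2 c₀ hc₀ α _ μ _ ι _ T K hTmeas hKmeas hKT hKdisj hTpos hTfin hTc hnest
    g S hg2 hS hS2
  -- exponents
  set q : ℝ := 2 * r / (2 * r - 1) with hq
  have h2r1 : 0 < 2 * r - 1 := by linarith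
  have hrpos : (0:ℝ) < r := by linarith
  have hq1 : 1 < q := by rw [hq, lt_div_iff₀ h2r1]; linarith
  have hq2 : q ≤ 2 := by rw [hq, div_le_iff₀ h2r1]; nlinarith
  have hq2' : q < 2 := by rw [hq, div_lt_iff₀ h2r1]; nlinarith
  have hqpos : (0:ℝ) < q := by linarith
  set p : ℝ := 2 / q with hp
  have hp1 : 1 < p := by rw [hp, lt_div_iff₀ hqpos]; linarith
  have hppos : (0:ℝ) < p := by linarith
  have hqp : q * p = 2 := by rw [hp]; field_simp
  have hexp : (2 * r - 1) / (2 * r) = q⁻¹ := by rw [hq, inv_div]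
  -- measurability of |g|
  have hgae : AEMeasurable (fun x => |g x|) μ := by
    have h1 : AEMeasurable (fun x => g x ^ 2) μ := hg2.aemeasurable
    have h2 : AEMeasurable (fun x => Real.sqrt (g x ^ 2)) μ :=
      Real.continuous_sqrt.measurable.comp_aemeasurable h1
    simpa [Real.sqrt_sq_eq_abs] using h2
  have hgqae : AEMeasurable (fun x => |g x| ^ q) μ :=
    (Real.continuous_rpow_const hqpos.le).measurable.comp_aemeasurable hgae
  set H : α → ℝ≥0∞ := fun x => ENNReal.ofReal (|g x| ^ q) with hH
  have hHae : AEMeasurable H μ := hgqae.ennreal_ofReal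
  have hHp : ∀ x, H x ^ p = ENNReal.ofReal (g x ^ 2) := by
    intro x
    rw [hH, ENNReal.ofReal_rpow_of_nonneg (Real.rpow_nonneg (abs_nonneg _) _) hppos.le]
    congr 1
    rw [← Real.rpow_mul (abs_nonneg _), hqp]
    rw [show (2:ℝ) = ((2:ℕ):ℝ) by norm_num, Real.rpow_natCast, sq_abs]
  have habs_le : ∀ x, |g x| ^ q ≤ 1 + g x ^ 2 := by
    intro x
    rcases le_or_gt (|g x|) 1 with h | h
    · have h1 : |g x| ^ q ≤ 1 := Real.rpow_le_one (abs_nonneg _) h hqpos.le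
      nlinarith [sq_nonneg (g x)]
    · have h1 : |g x| ^ q ≤ |g x| ^ (2:ℝ) :=
        Real.rpow_le_rpow_of_exponent_le h.le hq2
      have h2 : |g x| ^ (2:ℝ) = g x ^ 2 := by
        rw [show (2:ℝ) = ((2:ℕ):ℝ) by norm_num, Real.rpow_natCast, sq_abs]
      nlinarith
  have hgqnn : ∀ x, 0 ≤ |g x| ^ q := fun x => Real.rpow_nonneg (abs_nonneg _) _
  have hgq_int : Integrable (fun x => |g x| ^ q) μ := by
    refine ((integrable_const (1:ℝ)).add hg2).mono' hgqae.aestronglyMeasurable ?_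
    refine Filter.Eventually.of_forall fun x => ?_
    rw [Real.norm_eq_abs, abs_of_nonneg (hgqnn x)]
    exact habs_le x
  set ν := μ.withDensity H with hν
  have hνs : ∀ s : Set α, MeasurableSet s → ν s = ∫⁻ x in s, H x ∂μ :=
    fun s hs => withDensity_apply H hs
  have hνfin : ∀ s : Set α, MeasurableSet s → ν s < ⊤ := by
    intro s hs
    rw [hνs s hs]
    calc ∫⁻ x in s, H x ∂μ ≤ ∫⁻ x, H x ∂μ := lintegral_mono' Measure.restrict_le_self le_rfl
      _ < ⊤ := hgq_int.lintegral_lt_top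
  set A : ι → ℝ≥0∞ := fun i => ν (T i) / μ (T i) with hA
  have hAfin : ∀ i, A i ≠ ⊤ := by
    intro i
    rw [hA]
    exact (ENNReal.div_lt_top (hνfin _ (hTmeas i)).ne (hTpos i).ne').ne
  have hApfin : ∀ i, A i ^ p ≠ ⊤ :=
    fun i => (ENNReal.rpow_lt_top_of_nonneg hppos.le (hAfin i)).ne
  -- the average in the statement is (A i).toReal
  have havg : ∀ i, ((μ (T i)).toReal⁻¹ * ∫ x in T i, |g x| ^ q ∂μ) = (A i).toReal := by
    intro i
    have hint : ∫ x in T i, |g x| ^ q ∂μ = (ν (T i)).toReal := by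
      rw [hνs _ (hTmeas i)]
      rw [integral_eq_lintegral_of_nonneg_ae (Filter.Eventually.of_forall hgqnn)
        hgqae.aestronglyMeasurable.restrict]
    rw [hint, hA, ENNReal.toReal_div, div_eq_mul_inv]
    ring
  -- pointwise identity
  have hab : ∀ i, ENNReal.ofReal
      ((((μ (T i)).toReal⁻¹ * ∫ x in T i, |g x| ^ q ∂μ) ^ ((2 * r - 1) / (2 * r))) ^ 2)
      = A i ^ p := by
    intro i
    rw [havg i, hexp]
    rw [← Real.rpow_natCast ((A i).toReal ^ q⁻¹) 2, ← Real.rpow_mul ENNReal.toReal_nonneg]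
    have h1 : q⁻¹ * ((2:ℕ):ℝ) = p := by rw [hp]; push_cast; ring
    rw [h1, ENNReal.toReal_rpow, ENNReal.ofReal_toReal (hApfin i)]
  have hptwise : ∀ z, ENNReal.ofReal (S z ^ 2)
      = ∑' i, (K i).indicator (fun _ => A i ^ p) z := by
    intro z
    by_cases hz : ∃ i, z ∈ K i
    · obtain ⟨i0, hi0⟩ := hz
      have hznot : ∀ j : ι, j ≠ i0 → z ∉ K j := by
        intro j hj hzj
        exact (Set.disjoint_left.mp (hKdisj hj)) hzj hi0
      have hSz : S z = ((μ (T i0)).toReal⁻¹ *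
          ∫ x in T i0, |g x| ^ q ∂μ) ^ ((2 * r - 1) / (2 * r)) := by
        rw [hS z, tsum_eq_single i0
          (fun j hj => Set.indicator_of_notMem (hznot j hj) _)]
        exact Set.indicator_of_mem hi0 _
      rw [tsum_eq_single i0 (fun j hj => Set.indicator_of_notMem (hznot j hj) _),
        Set.indicator_of_mem hi0, hSz]
      exact hab i0
    · push_neg at hz
      have hSz : S z = 0 := by
        rw [hS z]
        have : ∀ i : ι, (K i).indicator
            (fun _ => ((μ (T i)).toReal⁻¹ *
              ∫ x in T i, |g x| ^ q ∂μ) ^ ((2 * r - 1) / (2 * r))) z = 0 :=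
          fun i => Set.indicator_of_notMem (hz i) _
        rw [tsum_congr this, tsum_zero]
      rw [hSz]
      have : ∀ i : ι, (K i).indicator (fun _ => A i ^ p) z = 0 :=
        fun i => Set.indicator_of_notMem (hz i) _
      rw [tsum_congr this, tsum_zero]
      norm_num
  -- LHS as a sum
  have hlhs : ∫⁻ x, ENNReal.ofReal (S x ^ 2) ∂μ = ∑' i, A i ^ p * μ (K i) := by
    calc ∫⁻ x, ENNReal.ofReal (S x ^ 2) ∂μ
        = ∫⁻ x, ∑' i, (K i).indicator (fun _ => A i ^ p) x ∂μ := lintegral_congr hptwise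
      _ = ∑' i, ∫⁻ x, (K i).indicator (fun _ => A i ^ p) x ∂μ :=
          lintegral_tsum (fun i => (measurable_const.indicator (hKmeas i)).aemeasurable)
      _ = ∑' i, A i ^ p * μ (K i) := by
          refine tsum_congr fun i => ?_
          rw [lintegral_indicator (hKmeas i), setLIntegral_const]
  -- embedding into the maximal function
  set M : α → ℝ≥0∞ := fun x => ⨆ i, (T i).indicator (fun _ => A i) x with hMdef
  have hMmeas : Measurable M :=
    Measurable.iSup fun i => measurable_const.indicator (hTmeas i)
  have hembed : ∑' i, A i ^ p * μ (K i) ≤ ∫⁻ x, M x ^ p ∂μ := by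
    calc ∑' i, A i ^ p * μ (K i) = ∑' i, ∫⁻ _ in K i, A i ^ p ∂μ := by
          refine tsum_congr fun i => ?_
          rw [setLIntegral_const]
      _ ≤ ∑' i, ∫⁻ x in K i, M x ^ p ∂μ := by
          refine ENNReal.tsum_le_tsum fun i => ?_
          refine setLIntegral_mono (hMmeas.pow_const p) fun x hx => ?_
          refine ENNReal.rpow_le_rpow ?_ hppos.le
          have h1 : (T i).indicator (fun _ => A i) x = A i :=
            Set.indicator_of_mem (hKT i hx) _
          rw [hMdef, ← h1]
          exact le_iSup (fun j => (T j).indicator (fun _ => A j) x) i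
      _ = ∫⁻ x in ⋃ i, K i, M x ^ p ∂μ :=
          (lintegral_iUnion hKmeas hKdisj _).symm
      _ ≤ ∫⁻ x, M x ^ p ∂μ := lintegral_mono' Measure.restrict_le_self le_rfl
  -- Doob
  have hdoob := doob_tree μ T hTmeas hnest H hHae p hp1
  have hrhs : (∫⁻ x, H x ^ p ∂μ) = ∫⁻ x, ENNReal.ofReal (g x ^ 2) ∂μ :=
    lintegral_congr hHp
  -- numeric bound
  have hnum : (p / (p - 1)) ^ p ≤ 27 * (r - 1)⁻¹ := by
    set ε : ℝ := r - 1 with hε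
    have hε0 : 0 < ε := by rw [hε]; linarith
    have hε1 : ε ≤ 1 := by rw [hε]; linarith
    have hrne : r ≠ 0 := by linarith
    have h2r1ne : 2 * r - 1 ≠ 0 := by linarith
    have hpval : p = (2 * r - 1) / r := by
      rw [hp, hq]; field_simp
    have hp1val : p - 1 = ε / r := by rw [hpval, hε]; field_simp; ring
    have hppval : p / (p - 1) = (2 * r - 1) / ε := by
      rw [hp1val, hpval]
      have hεne : ε ≠ 0 := hε0.ne'
      field_simp
    have h3εpos : (0:ℝ) < 3 / ε := by positivity
    have h3εbase : (1:ℝ) ≤ 3 / ε := by rw [le_div_iff₀ hε0]; linarith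
    have hb1 : (2 * r - 1) / ε ≤ 3 / ε :=
      (div_le_div_iff_of_pos_right hε0).2 (by linarith)
    have hbase_nn : (0:ℝ) ≤ (2 * r - 1) / ε := by positivity
    have h1 : ((2 * r - 1) / ε) ^ p ≤ (3 / ε) ^ p :=
      Real.rpow_le_rpow hbase_nn hb1 hppos.le
    have hple : p ≤ 1 + ε := by
      have h2 : ε / r ≤ ε := div_le_self hε0.le (by linarith)
      have h3 : p - 1 ≤ ε := by rw [hp1val]; exact h2
      linarith
    have h2 : (3 / ε) ^ p ≤ (3 / ε) ^ (1 + ε) :=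
      Real.rpow_le_rpow_of_exponent_le h3εbase hple
    have h3 : (3 / ε) ^ (1 + ε) = (3 / ε) * (3 / ε) ^ ε := by
      rw [Real.rpow_add h3εpos, Real.rpow_one]
    have h4 : (3 / ε) ^ ε = 3 ^ ε / ε ^ ε := Real.div_rpow (by norm_num) hε0.le _
    have h5 : (3:ℝ) ^ ε ≤ 3 := by
      calc (3:ℝ) ^ ε ≤ 3 ^ (1:ℝ) :=
            Real.rpow_le_rpow_of_exponent_le (by norm_num) hε1
        _ = 3 := Real.rpow_one 3
    have h6 : (1:ℝ) / 3 ≤ ε ^ ε := by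
      have hlog : -1 ≤ Real.log ε * ε := by
        have h7 : Real.log ε⁻¹ ≤ ε⁻¹ - 1 := Real.log_le_sub_one_of_pos (by positivity)
        rw [Real.log_inv] at h7
        have h8 : (1 - ε⁻¹) * ε ≤ Real.log ε * ε :=
          mul_le_mul_of_nonneg_right (by linarith) hε0.le
        have h9 : (1 - ε⁻¹) * ε = ε - 1 := by
          rw [sub_mul, one_mul, inv_mul_cancel₀ hε0.ne']
        have h10 : ε - 1 ≤ Real.log ε * ε := h9 ▸ h8
        linarith
      have hexp3 : Real.exp 1 ≤ 3 :=
        le_of_lt (lt_of_lt_of_le Real.exp_one_lt_d9 (by norm_num))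
      calc (1:ℝ) / 3 ≤ Real.exp (-1) := by
            rw [Real.exp_neg, one_div]
            exact inv_anti₀ (Real.exp_pos 1) hexp3
        _ ≤ Real.exp (Real.log ε * ε) := Real.exp_le_exp.2 hlog
        _ = ε ^ ε := (Real.rpow_def_of_pos hε0 ε).symm
    have h8 : (3:ℝ) ^ ε / ε ^ ε ≤ 9 := by
      calc (3:ℝ) ^ ε / ε ^ ε ≤ 3 / (1 / 3) :=
            div_le_div₀ (by norm_num) h5 (by norm_num) h6
        _ = 9 := by norm_num
    calc (p / (p - 1)) ^ p ≤ (3 / ε) ^ p := by rw [hppval]; exact h1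
      _ ≤ (3 / ε) * (3 ^ ε / ε ^ ε) := by rw [← h4, ← h3]; exact h2
      _ ≤ (3 / ε) * 9 := mul_le_mul_of_nonneg_left h8 (by positivity)
      _ = 27 * ε⁻¹ := by field_simp; ring
  -- final assembly
  have hfinal : ∫⁻ x, ENNReal.ofReal (S x ^ 2) ∂μ
      ≤ ENNReal.ofReal (27 * (r - 1)⁻¹) * ∫⁻ x, ENNReal.ofReal (g x ^ 2) ∂μ := by
    calc ∫⁻ x, ENNReal.ofReal (S x ^ 2) ∂μ = ∑' i, A i ^ p * μ (K i) := hlhs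
      _ ≤ ∫⁻ x, M x ^ p ∂μ := hembed
      _ ≤ ENNReal.ofReal ((p / (p - 1)) ^ p) * ∫⁻ x, H x ^ p ∂μ := hdoob
      _ ≤ ENNReal.ofReal (27 * (r - 1)⁻¹) * ∫⁻ x, ENNReal.ofReal (g x ^ 2) ∂μ := by
          rw [← hrhs]
          exact mul_le_mul_left (ENNReal.ofReal_le_ofReal hnum) _
  have hSint : ∫ x, S x ^ 2 ∂μ = (∫⁻ x, ENNReal.ofReal (S x ^ 2) ∂μ).toReal := by
    rw [integral_eq_lintegral_of_nonneg_ae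
      (Filter.Eventually.of_forall fun x => sq_nonneg (S x)) hS2.aestronglyMeasurable]
  have hgint : ∫ x, g x ^ 2 ∂μ = (∫⁻ x, ENNReal.ofReal (g x ^ 2) ∂μ).toReal := by
    rw [integral_eq_lintegral_of_nonneg_ae
      (Filter.Eventually.of_forall fun x => sq_nonneg (g x)) hg2.aestronglyMeasurable]
  have hglt : (∫⁻ x, ENNReal.ofReal (g x ^ 2) ∂μ) < ⊤ := hg2.lintegral_lt_top
  have hinv : (0:ℝ) < (r - 1)⁻¹ := inv_pos.2 (by linarith)
  have hcoef : (0:ℝ) ≤ 27 * (r - 1)⁻¹ := by positivity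
  rw [hSint, hgint]
  calc (∫⁻ x, ENNReal.ofReal (S x ^ 2) ∂μ).toReal
      ≤ (ENNReal.ofReal (27 * (r - 1)⁻¹) * ∫⁻ x, ENNReal.ofReal (g x ^ 2) ∂μ).toReal := by
        refine ENNReal.toReal_mono ?_ hfinal
        exact (ENNReal.mul_lt_top ENNReal.ofReal_lt_top hglt).ne
    _ = 27 * (r - 1)⁻¹ * (∫⁻ x, ENNReal.ofReal (g x ^ 2) ∂μ).toReal := by
        rw [ENNReal.toReal_mul, ENNReal.toReal_ofReal hcoef]
    _ ≤ 27 * c₀ * (r - 1)⁻¹ * (∫⁻ x, ENNReal.ofReal (g x ^ 2) ∂μ).toReal := by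
        have ht0 : 0 ≤ (∫⁻ x, ENNReal.ofReal (g x ^ 2) ∂μ).toReal := ENNReal.toReal_nonneg
        nlinarith [mul_nonneg (mul_nonneg (by linarith : (0:ℝ) ≤ c₀ - 1) hinv.le) ht0]
end
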